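/- arXiv:1605.01385 — 10 statements merged into one kernel-verified Lean document; each statement's English description precedes it below -/
import Mathlib

section
/- Let (X,f) be a dynamical system with X nonempty and metrizable. Then (X,f) is an abstract ω-limit set if and only if f is weakly incompressible. -/
open Topology Set

/-- `ω*`: the space of free (non-principal) ultrafilters on `ℕ`,
a subspace of `βℕ = Ultrafilter ℕ`. -/
abbrev OmegaStar : Type := {p : Ultrafilter ℕ // ∀ n : ℕ, p ≠ pure n}

lemma map_succ_free (p : Ultrafilter ℕ) (hp : ∀ n : ℕ, p ≠ pure n) :
    ∀ n : ℕ, Ultrafilter.map (· + 1) p ≠ pure n := by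
  intro n h
  have h1 : (· + 1) ⁻¹' {n} ∈ p := by
    have : ({n} : Set ℕ) ∈ Ultrafilter.map (· + 1) p := by
      rw [h]; exact rfl
    exact Ultrafilter.mem_map.mp this
  rcases n with _ | k
  · have : ((· + 1) ⁻¹' {0} : Set ℕ) = ∅ := by
      ext m; simp
    rw [this] at h1
    exact Ultrafilter.empty_notMem h1
  · have : ((· + 1) ⁻¹' {k + 1} : Set ℕ) = {k} := by
      ext m; simp
    rw [this] at h1
    obtain ⟨x, hx, hpx⟩ := Ultrafilter.eq_pure_of_finite_mem (Set.finite_singleton k) h1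
    rcases hx with rfl
    exact hp x hpx

/-- The shift map `σ : ω* → ω*`, pushforward under `n ↦ n + 1`. -/
def shiftMap (p : OmegaStar) : OmegaStar :=
  ⟨Ultrafilter.map (· + 1) p.1, map_succ_free p.1 p.2⟩

/-- `(X, f)` is a quotient of `(ω*, σ)`. -/
def IsQuotientOfShift {X : Type*} [TopologicalSpace X] (f : X → X) : Prop :=
  ∃ Q : OmegaStar → X, Continuous Q ∧ Function.Surjective Q ∧
    ∀ p : OmegaStar, Q (shiftMap p) = f (Q p)

/-- A self-map `f : X → X` is weakly incompressible if no open `U` with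
`∅ ≠ U ≠ X` satisfies `f(cl U) ⊆ U`. -/
def WeaklyIncompressible {X : Type*} [TopologicalSpace X] (f : X → X) : Prop :=
  ∀ U : Set X, IsOpen U → U.Nonempty → U ≠ Set.univ → ¬ (f '' closure U ⊆ U)

/-- The weight of a topological space: the least cardinality of a topological basis. -/
noncomputable def tweight (X : Type*) [TopologicalSpace X] : Cardinal :=
  ⨅ B : {B : Set (Set X) // TopologicalSpace.IsTopologicalBasis B}, Cardinal.mk B.1

/-- The ω-limit set of a point `y` under `g`. -/
def omegaLimitSet {Y : Type*} [TopologicalSpace Y] (g : Y → Y) (y : Y) : Set Y :=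
  ⋂ n : ℕ, closure {z : Y | ∃ m : ℕ, n ≤ m ∧ g^[m] y = z}

/-- `(X, f)` is an abstract ω-limit set. -/
def AbstractOmegaLimit {X : Type u} [TopologicalSpace X] (f : X → X) : Prop :=
  ∃ (Y : Type u) (_ : TopologicalSpace Y) (_ : CompactSpace Y) (_ : T2Space Y)
    (g : Y → Y) (y : Y), Continuous g ∧
      Set.MapsTo g (omegaLimitSet g y) (omegaLimitSet g y) ∧
      ∃ H : X ≃ₜ (omegaLimitSet g y), ∀ x : X, (H (f x) : Y) = g (H x)

/-!
If `Λ = ω(y)` and `U ⊊ Λ` is nonempty, relatively open and `g (closure U) ⊆ U`, the orbit of `y`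
enters a neighbourhood of `Λ \ U` from outside infinitely often, and a cluster point of the orbit
at the times just before those entries is a point of `U` that `g` maps out of `U` (Šarkovskii).

Conversely, weak incompressibility joins any two points by `ε`-chains for every `ε > 0`.
Concatenating chains of shrinking mesh through a dense sequence gives an asymptotic pseudo-orbit
`x` accumulating at every point. In `X × ℕ∞`, the graph `{(x n, n)}` together with `X × {⊤}` is
compact; the shift `(x n, n) ↦ (x (n + 1), n + 1)`, extended by `f` on `X × {⊤}`, is continuous
on it, and the ω-limit set of `(x 0, 0)` is `X × {⊤}`.
-/

universe u

open Filter

theorem Topology.IsInducing.mapClusterPt_comp_iff {α X Y : Type*} [TopologicalSpace X]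
    [TopologicalSpace Y] {e : X → Y} (he : IsInducing e) {F : Filter α} {u : α → X} {a : X} :
    MapClusterPt (e a) F (e ∘ u) ↔ MapClusterPt a F u := by
  rw [mapClusterPt_comp, he.mapClusterPt_iff]
  rfl

section OmegaLimit

variable {Y : Type*} [TopologicalSpace Y] {g : Y → Y} {y : Y}

theorem mem_omegaLimitSet_iff {z : Y} :
    z ∈ omegaLimitSet g y ↔ MapClusterPt z atTop (fun n => g^[n] y) := by
  simp [omegaLimitSet, mapClusterPt_atTop_iff_forall_mem_closure, Set.image]

theorem isClosed_omegaLimitSet : IsClosed (omegaLimitSet g y) :=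
  isClosed_iInter fun _ => isClosed_closure

theorem frequently_not_and_succ {p : ℕ → Prop} (h : ∃ᶠ n in atTop, p n)
    (h' : ∃ᶠ n in atTop, ¬ p n) : ∃ᶠ n in atTop, ¬ p n ∧ p (n + 1) := by
  rw [frequently_atTop] at *
  intro N
  obtain ⟨m, hNm, hm⟩ := h' N
  by_contra! hstep
  have hnot : ∀ n ≥ m, ¬ p n := fun n hmn =>
    Nat.le_induction hm (fun k hmk hk => hstep k (hNm.trans hmk) hk) n hmn
  obtain ⟨k, hmk, hk⟩ := h m
  exact hnot k hmk hk

theorem not_image_closure_subset_of_subset_omegaLimitSet [CompactSpace Y] [T2Space Y]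
    (hg : Continuous g) {U : Set Y} (hUΛ : U ⊆ omegaLimitSet g y)
    (hU : IsClosed (omegaLimitSet g y \ U)) (hUne : U.Nonempty)
    (hΛU : (omegaLimitSet g y \ U).Nonempty) : ¬ g '' closure U ⊆ U := by
  intro hgU
  set u : ℕ → Y := fun n => g^[n] y
  have hu : ∀ n, g (u n) = u (n + 1) := fun n => (Function.iterate_succ_apply' g n y).symm
  have hK : IsClosed (g '' closure U) := (isClosed_closure.isCompact.image hg).isClosed
  obtain ⟨W, hW, hUW, hWK⟩ :=
    normal_exists_closure_subset hU hK.isOpen_compl fun z hz hzK => hz.2 (hgU hzK)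
  obtain ⟨z, hz⟩ := hΛU
  obtain ⟨p, hp⟩ : (g '' closure U).Nonempty := (hUne.mono subset_closure).image g
  have hin : ∃ᶠ n in atTop, u n ∈ W :=
    (mem_omegaLimitSet_iff.1 hz.1).frequently (hW.mem_nhds (hUW hz))
  have hout : ∃ᶠ n in atTop, u n ∉ W :=
    ((mem_omegaLimitSet_iff.1 (hUΛ (hgU hp))).frequently
      (isClosed_closure.isOpen_compl.mem_nhds fun hpW => hWK hpW hp)).mono
      fun _ hn hnW => hn (subset_closure hnW)
  set l := atTop ⊓ 𝓟 {n | u n ∉ W ∧ u (n + 1) ∈ W}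
  have : l.NeBot := frequently_iff_neBot.1 (frequently_not_and_succ hin hout)
  obtain ⟨w, -, hw⟩ := isCompact_univ.exists_mapClusterPt (f := l) (u := u) (by simp)
  have hwΛ : w ∈ omegaLimitSet g y := mem_omegaLimitSet_iff.2 (hw.mono inf_le_left)
  have hwW : w ∉ W := hW.isClosed_compl.mem_of_mapClusterPt hw
    (mem_inf_of_right (mem_principal.2 fun _ hn => hn.1))
  have hgw : g w ∈ closure W := isClosed_closure.mem_of_mapClusterPt
    (hw.tendsto_comp (hg.tendsto w))
    (mem_inf_of_right (mem_principal.2 fun n hn =>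
      show g (u n) ∈ closure W from (hu n).symm ▸ subset_closure hn.2))
  have hwU : w ∈ U := by_contra fun hwU => hwW (hUW ⟨hwΛ, hwU⟩)
  exact hWK hgw ⟨w, subset_closure hwU, rfl⟩

theorem weaklyIncompressible_of_isClosedEmbedding_onto_omegaLimitSet [CompactSpace Y] [T2Space Y]
    (hg : Continuous g) {X : Type*} [TopologicalSpace X] {f : X → X} {e : X → Y}
    (he : IsClosedEmbedding e) (hrange : range e = omegaLimitSet g y)
    (hconj : ∀ a, e (f a) = g (e a)) : WeaklyIncompressible f := by
  intro U hU hUne hΛU hfU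
  have hcompl : omegaLimitSet g y \ e '' U = e '' Uᶜ := hrange ▸ range_sdiff_image he.injective U
  refine not_image_closure_subset_of_subset_omegaLimitSet (y := y) hg (U := e '' U)
    (hrange ▸ image_subset_range e U) ?_ (hUne.image e) ?_ ?_
  · exact hcompl ▸ he.isClosedMap _ hU.isClosed_compl
  · exact hcompl ▸ (nonempty_compl.2 hΛU).image e
  · rw [he.closure_image_eq, image_image, ← funext hconj, ← image_image]
    exact image_mono hfU

end OmegaLimit

theorem AbstractOmegaLimit.weaklyIncompressible {X : Type u} [TopologicalSpace X] {f : X → X}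
    (h : AbstractOmegaLimit f) : WeaklyIncompressible f := by
  obtain ⟨Y, _, _, _, g, y, hg, -, H, hH⟩ := h
  exact weaklyIncompressible_of_isClosedEmbedding_onto_omegaLimitSet hg
    (isClosed_omegaLimitSet.isClosedEmbedding_subtypeVal.comp H.isClosedEmbedding)
    (by rw [range_comp, H.surjective.range_eq, image_univ, Subtype.range_coe]) hH

theorem Relation.TransGen.exists_seq {α : Type*} {r : α → α → Prop} {a b : α}
    (h : Relation.TransGen r a b) :
    ∃ n, 0 < n ∧ ∃ z : ℕ → α, z 0 = a ∧ z n = b ∧ ∀ i < n, r (z i) (z (i + 1)) := by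
  induction h using Relation.TransGen.head_induction_on with
  | single hab => exact ⟨1, one_pos, fun | 0 => _ | _ + 1 => b, rfl, rfl, by simpa using hab⟩
  | head hac _ ih =>
    obtain ⟨n, -, z, rfl, rfl, hz⟩ := ih
    refine ⟨n + 1, n.succ_pos, fun | 0 => _ | i + 1 => z i, rfl, rfl, ?_⟩
    rintro (_ | i) hi
    exacts [hac, hz i (by omega)]

section Chains

variable {X : Type*} [MetricSpace X] {f : X → X}

/-- The points reachable from `a` by an `ε`-chain form an open set containing `f a` and mapped
into itself with its closure, so weak incompressibility forces it to be everything. -/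
theorem WeaklyIncompressible.transGen_dist_lt (hwi : WeaklyIncompressible f) (hf : Continuous f)
    {ε : ℝ} (hε : 0 < ε) (a b : X) : Relation.TransGen (fun p q => dist (f p) q < ε) a b := by
  set R := {b | Relation.TransGen (fun p q => dist (f p) q < ε) a b}
  have hR : R = ⋃ c ∈ {c | Relation.ReflTransGen (fun p q => dist (f p) q < ε) a c},
      Metric.ball (f c) ε := by
    ext; simp [R, Relation.TransGen.tail'_iff, dist_comm]
  have hfR : f '' closure R ⊆ R := by
    rintro _ ⟨c, hc, rfl⟩
    obtain ⟨c', hc', hc'R⟩ := mem_closure_iff_nhds.1 hc _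
      (hf.continuousAt.preimage_mem_nhds (Metric.ball_mem_nhds (f c) hε))
    exact hc'R.tail hc'
  by_contra hb
  exact hwi R (hR ▸ isOpen_biUnion fun _ _ => Metric.isOpen_ball)
    ⟨f a, .single (by simpa using hε)⟩ ((ne_univ_iff_exists_notMem R).2 ⟨b, hb⟩) hfR

end Chains

section Concatenation

/-- Position `(k, i)` is the `i`-th point of the `k`-th block, which has length `len k`. -/
def chainStep (len : ℕ → ℕ) (p : ℕ × ℕ) : ℕ × ℕ :=
  if p.2 + 1 < len p.1 then (p.1, p.2 + 1) else (p.1 + 1, 0)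

variable {len : ℕ → ℕ}

theorem chainStep_iterate_of_lt {k j : ℕ} (hj : j < len k) :
    (chainStep len)^[j] (k, 0) = (k, j) := by
  induction j with
  | zero => rfl
  | succ j ih => simp [Function.iterate_succ_apply', ih (by omega), chainStep, hj]

theorem chainStep_iterate_len {k : ℕ} (hk : 0 < len k) :
    (chainStep len)^[len k] (k, 0) = (k + 1, 0) := by
  obtain ⟨j, hj⟩ := Nat.exists_eq_add_one_of_ne_zero hk.ne'
  rw [hj, Function.iterate_succ_apply', chainStep_iterate_of_lt (by omega)]
  simp [chainStep, hj]

theorem exists_chainStep_iterate_eq (hlen : ∀ k, 0 < len k) (k : ℕ) :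
    ∃ n ≥ k, (chainStep len)^[n] (0, 0) = (k, 0) := by
  induction k with
  | zero => exact ⟨0, le_rfl, rfl⟩
  | succ k ih =>
    obtain ⟨n, hkn, hn⟩ := ih
    refine ⟨len k + n, by have := hlen k; omega, ?_⟩
    rw [Function.iterate_add_apply, hn, chainStep_iterate_len (hlen k)]

theorem snd_chainStep_iterate_lt (hlen : ∀ k, 0 < len k) (n : ℕ) :
    ((chainStep len)^[n] (0, 0)).2 < len ((chainStep len)^[n] (0, 0)).1 := by
  induction n with
  | zero => exact hlen 0
  | succ n ih =>
    rw [Function.iterate_succ_apply', chainStep]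
    split_ifs with h
    exacts [h, hlen _]

theorem monotone_fst_chainStep_iterate : Monotone fun n => ((chainStep len)^[n] (0, 0)).1 := by
  refine monotone_nat_of_le_succ fun n => ?_
  rw [Function.iterate_succ_apply', chainStep]
  split_ifs <;> simp

theorem exists_seq_of_transGen {α : Type*} (r : ℕ → α → α → Prop) (d : ℕ → α)
    (h : ∀ k, Relation.TransGen (r k) (d k) (d (k + 1))) :
    ∃ (x : ℕ → α) (s : ℕ → ℕ), Tendsto s atTop atTop ∧ (∀ n, r (s n) (x n) (x (n + 1))) ∧
      ∀ k, ∃ n ≥ k, x n = d k := by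
  choose len hlen z hz0 hzlen hz using fun k => (h k).exists_seq
  set pos : ℕ → ℕ × ℕ := fun n => (chainStep len)^[n] (0, 0)
  have hlt : ∀ n, (pos n).2 < len (pos n).1 := snd_chainStep_iterate_lt hlen
  have hnext : ∀ n, z (pos (n + 1)).1 (pos (n + 1)).2 = z (pos n).1 ((pos n).2 + 1) := by
    intro n
    have hn := hlt n
    simp only [pos, Function.iterate_succ_apply'] at hn ⊢
    generalize (chainStep len)^[n] (0, 0) = p at hn ⊢
    obtain ⟨k, i⟩ := p
    simp only [chainStep] at hn ⊢
    split_ifs with h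
    · rfl
    · rw [hz0, ← hzlen, show i + 1 = len k by omega]
  refine ⟨fun n => z (pos n).1 (pos n).2, fun n => (pos n).1, ?_, fun n => ?_, fun k => ?_⟩
  · refine tendsto_atTop_atTop_of_monotone monotone_fst_chainStep_iterate fun k => ?_
    obtain ⟨n, -, hn⟩ := exists_chainStep_iterate_eq hlen k
    exact ⟨n, (congrArg Prod.fst hn).ge⟩
  · show r (pos n).1 (z (pos n).1 (pos n).2) (z (pos (n + 1)).1 (pos (n + 1)).2)
    rw [hnext]
    exact hz _ _ (hlt n)
  · obtain ⟨n, hkn, hn⟩ := exists_chainStep_iterate_eq hlen k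
    exact ⟨n, hkn, by simp [pos, hn, hz0]⟩

end Concatenation

section PseudoOrbit

open TopologicalSpace

variable {X : Type*} [MetricSpace X] {f : X → X}

theorem WeaklyIncompressible.exists_pseudoOrbit [SeparableSpace X] [Nonempty X]
    (hwi : WeaklyIncompressible f) (hf : Continuous f) :
    ∃ x : ℕ → X, Tendsto (fun n => dist (f (x n)) (x (n + 1))) atTop (𝓝 0) ∧
      ∀ a, MapClusterPt a atTop x := by
  -- each term of the dense sequence is a target for infinitely many `k`
  set d : ℕ → X := fun k => denseSeq X k.unpair.1
  obtain ⟨x, s, hs, hstep, hvisit⟩ := exists_seq_of_transGen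
    (fun k p q => dist (f p) q < 1 / (k + 1)) d fun k => hwi.transGen_dist_lt hf (by positivity) _ _
  refine ⟨x, squeeze_zero (fun _ => dist_nonneg) (fun n => (hstep n).le)
    (tendsto_one_div_add_atTop_nhds_zero_nat.comp hs), fun a => ?_⟩
  refine (denseRange_denseSeq X).induction_on a isClosed_setOfPred_clusterPt fun j => ?_
  refine mapClusterPt_iff_frequently.2 fun t ht => frequently_atTop.2 fun N => ?_
  obtain ⟨n, hn, hxn⟩ := hvisit (Nat.pair j N)
  refine ⟨n, (Nat.right_le_pair j N).trans hn, ?_⟩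
  rw [hxn, show d (Nat.pair j N) = denseSeq X j by simp [d]]
  exact mem_of_mem_nhds ht

end PseudoOrbit

section ExtendedGraph

variable {X : Type*}

def extendedGraph (x : ℕ → X) : Set (X × ℕ∞) := {q | ∀ n : ℕ, q.2 = n → q.1 = x n}

def extendedShift (f : X → X) (x : ℕ → X) (q : X × ℕ∞) : X × ℕ∞ :=
  (ENat.recTopCoe (f q.1) (fun n => x (n + 1)) q.2, q.2 + 1)

variable {f : X → X} {x : ℕ → X}

theorem natCast_mem_extendedGraph (n : ℕ) : (x n, (n : ℕ∞)) ∈ extendedGraph x :=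
  fun _ h => congrArg x (Nat.cast_injective h)

theorem top_mem_extendedGraph (a : X) : (a, ⊤) ∈ extendedGraph x :=
  fun n h => absurd h.symm (ENat.natCast_ne_top n)

theorem isClosed_extendedGraph [TopologicalSpace X] [T2Space X] : IsClosed (extendedGraph x) := by
  simp only [extendedGraph, ofPred_forall]
  exact isClosed_iInter fun n => isClosed_imp
    ((ENat.isOpen_singleton (ENat.natCast_ne_top n)).preimage continuous_snd)
    (isClosed_eq continuous_fst continuous_const)

theorem mapsTo_extendedShift : MapsTo (extendedShift f x) (extendedGraph x) (extendedGraph x) := by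
  rintro ⟨a, t⟩ - n hn
  induction t using ENat.recTopCoe with
  | top => simp [extendedShift] at hn
  | coe m =>
    simp only [extendedShift] at hn ⊢
    obtain rfl : m + 1 = n := by exact_mod_cast hn
    simp

theorem extendedShift_iterate (n : ℕ) : (extendedShift f x)^[n] (x 0, 0) = (x n, (n : ℕ∞)) := by
  induction n with
  | zero => rfl
  | succ n ih => simp [Function.iterate_succ_apply', ih, extendedShift]

theorem continuousOn_extendedShift [MetricSpace X] (hf : Continuous f)
    (hx : Tendsto (fun n => dist (f (x n)) (x (n + 1))) atTop (𝓝 0)) :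
    ContinuousOn (extendedShift f x) (extendedGraph x) := by
  rintro ⟨a, t⟩ hq
  refine ContinuousWithinAt.prodMk ?_ (continuous_snd.add continuous_const).continuousWithinAt
  induction t using ENat.recTopCoe with
  | top =>
    simp only [ContinuousWithinAt, ENat.recTopCoe_top]
    refine (((hf.comp continuous_fst).tendsto (a, ⊤)).mono_left nhdsWithin_le_nhds).congr_dist ?_
    refine Metric.tendsto_nhds.2 fun ε hε => ?_
    obtain ⟨N, hN⟩ := Metric.tendsto_atTop.1 hx ε hε
    have hfar : ∀ᶠ q in 𝓝[extendedGraph x] (a, ⊤), (N : ℕ∞) < q.2 ∧ q ∈ extendedGraph x :=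
      Eventually.and (nhdsWithin_le_nhds <| continuous_snd.tendsto (a, ⊤) <|
        Ioi_mem_nhds (ENat.natCast_lt_top N)) self_mem_nhdsWithin
    filter_upwards [hfar] with ⟨b, t⟩ ⟨hNt, hq⟩
    induction t using ENat.recTopCoe with
    | top => simpa using hε
    | coe m =>
      obtain rfl : b = x m := hq m rfl
      simpa using hN m (ENat.natCast_le_natCast.1 hNt.le)
  | coe n =>
    refine (continuousAt_const (y := x (n + 1))).congr ?_ |>.continuousWithinAt
    filter_upwards [continuous_snd.tendsto (a, (n : ℕ∞))
      ((ENat.isOpen_singleton (ENat.natCast_ne_top n)).mem_nhds rfl)] with ⟨b, t⟩ (rfl : t = n)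
    simp

theorem mem_omegaLimitSet_extendedShift_iff [TopologicalSpace X]
    (hdense : ∀ a, MapClusterPt a atTop x) (q : extendedGraph x) :
    q ∈ omegaLimitSet (MapsTo.restrict _ _ _ (mapsTo_extendedShift (f := f)))
      ⟨(x 0, 0), natCast_mem_extendedGraph 0⟩ ↔ q.1.2 = ⊤ := by
  rw [mem_omegaLimitSet_iff, ← IsInducing.subtypeVal.mapClusterPt_comp_iff]
  have horbit : Subtype.val ∘ (fun n => (MapsTo.restrict _ _ _ (mapsTo_extendedShift (f := f)))^[n]
      ⟨(x 0, 0), natCast_mem_extendedGraph 0⟩) = fun n => (x n, (n : ℕ∞)) := by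
    funext n
    rw [Function.comp_apply, MapsTo.iterate_restrict]
    exact extendedShift_iterate n
  rw [horbit]
  constructor
  · intro h
    exact eq_of_nhds_neBot <|
      ClusterPt.mono (h.tendsto_comp (continuous_snd.tendsto _)) ENat.tendsto_natCast_nhds_top
  · obtain ⟨⟨a, t⟩, -⟩ := q
    rintro (rfl : t = ⊤)
    obtain ⟨U, hU, hxU⟩ := mapClusterPt_iff_ultrafilter.1 (hdense a)
    exact (hxU.prodMk_nhds (ENat.tendsto_natCast_nhds_top.mono_left hU)).mapClusterPt.mono hU

end ExtendedGraph

theorem abstractOmegaLimit_of_pseudoOrbit {X : Type u} [MetricSpace X] [CompactSpace X]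
    {f : X → X} (hf : Continuous f) {x : ℕ → X}
    (hx : Tendsto (fun n => dist (f (x n)) (x (n + 1))) atTop (𝓝 0))
    (hdense : ∀ a, MapClusterPt a atTop x) : AbstractOmegaLimit f := by
  have : CompactSpace (extendedGraph x) :=
    isCompact_iff_compactSpace.1 isClosed_extendedGraph.isCompact
  set g := MapsTo.restrict _ _ _ (mapsTo_extendedShift (f := f) (x := x))
  have hΛ := mem_omegaLimitSet_extendedShift_iff (f := f) hdense
  let e : X → omegaLimitSet g ⟨(x 0, 0), natCast_mem_extendedGraph 0⟩ :=
    fun a => ⟨⟨(a, ⊤), top_mem_extendedGraph a⟩, (hΛ _).2 rfl⟩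
  have he : Function.Bijective e := by
    refine ⟨fun a b h => congrArg (fun q => q.1.1.1) h, fun ⟨⟨⟨a, t⟩, hq⟩, hΛq⟩ => ⟨a, ?_⟩⟩
    obtain rfl : t = ⊤ := (hΛ _).1 hΛq
    rfl
  have hec : Continuous e :=
    ((continuous_id.prodMk continuous_const).subtype_mk _).subtype_mk _
  refine ⟨extendedGraph x, inferInstance, inferInstance, inferInstance, g, _,
    (continuousOn_extendedShift hf hx).mapsToRestrict _, fun q hq => (hΛ _).2 ?_,
    hec.homeoOfEquivCompactToT2 (f := Equiv.ofBijective e he), fun a => ?_⟩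
  · simp [g, extendedShift, (hΛ q).1 hq]
  · show (e (f a) : extendedGraph x) = g (e a)
    exact Subtype.ext (by simp [e, g, extendedShift])

theorem WeaklyIncompressible.abstractOmegaLimit {X : Type u} [TopologicalSpace X] [CompactSpace X]
    [Nonempty X] [TopologicalSpace.MetrizableSpace X] {f : X → X} (hf : Continuous f)
    (hwi : WeaklyIncompressible f) : AbstractOmegaLimit f := by
  let := TopologicalSpace.metrizableSpaceMetric X
  obtain ⟨x, hx, hdense⟩ := hwi.exists_pseudoOrbit hf
  exact abstractOmegaLimit_of_pseudoOrbit hf hx hdense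

theorem abstractOmegaLimit_iff_weaklyIncompressible_of_metrizable_general
    {X : Type u} [TopologicalSpace X] [CompactSpace X] [Nonempty X]
    [TopologicalSpace.MetrizableSpace X]
    (f : X → X) (hf : Continuous f) :
    AbstractOmegaLimit f ↔ WeaklyIncompressible f :=
  ⟨AbstractOmegaLimit.weaklyIncompressible, WeaklyIncompressible.abstractOmegaLimit hf⟩

/-- Bowen–Sharkovsky: a nonempty metrizable dynamical system is an abstract
ω-limit set iff it is weakly incompressible. -/
theorem abstractOmegaLimit_iff_weaklyIncompressible_of_metrizable
    {X : Type u} [TopologicalSpace X] [CompactSpace X] [T2Space X] [Nonempty X]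
    [TopologicalSpace.MetrizableSpace X]
    (f : X → X) (hf : Continuous f) :
    AbstractOmegaLimit f ↔ WeaklyIncompressible f :=
  abstractOmegaLimit_iff_weaklyIncompressible_of_metrizable_general f hf
end

section
/- Let (X,f) be a dynamical system. Then (X,f) is chain transitive if and only if f is weakly incompressible. -/
/-!
Fix an open cover `𝒰` and a point `a`. The set of points reachable from `a` by a `𝒰`-chain is
open, contains `f a`, and `f` maps its closure into it: a point `y` of the closure has a
reachable point `c` with `f c` and `f y` in a common member of `𝒰`. So weak incompressibility
forces it to be all of `X`. Conversely, if `U` is open with `∅ ≠ U ≠ X` and `f(cl U) ⊆ U`,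
then, `f(cl U)` being compact and hence closed, `{U, X \ f(cl U)}` is an open cover, and no
chain for it can leave `U`.
-/

open Topology Set

/-- `(X, f)` is chain transitive: for all `a, b` and every open cover `𝒰` of `X`
there is a `𝒰`-chain from `a` to `b`. -/
def ChainTransitive {X : Type*} [TopologicalSpace X] (f : X → X) : Prop :=
  ∀ a b : X, ∀ 𝒰 : Set (Set X), (∀ U ∈ 𝒰, IsOpen U) → Set.univ ⊆ ⋃₀ 𝒰 →
    ∃ (n : ℕ) (x : ℕ → X), 1 ≤ n ∧ x 0 = a ∧ x n = b ∧
      ∀ i < n, ∃ U ∈ 𝒰, f (x i) ∈ U ∧ x (i + 1) ∈ U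

theorem Relation.transGen_iff_exists_seq {α : Type*} (r : α → α → Prop) (a b : α) :
    Relation.TransGen r a b ↔ ∃ (n : ℕ) (x : ℕ → α), 1 ≤ n ∧ x 0 = a ∧ x n = b ∧
      ∀ i < n, r (x i) (x (i + 1)) := by
  constructor
  · intro h
    induction h with
    | single hab => exact ⟨1, fun i => if i = 0 then a else _, le_rfl, rfl, rfl, by simpa⟩
    | @tail b c _ hbc ih =>
      obtain ⟨n, x, hn, hx0, hxn, hx⟩ := ih
      refine ⟨n + 1, fun i => if i ≤ n then x i else c, by omega, by simpa, by simp, ?_⟩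
      intro i hi
      rcases Nat.lt_or_eq_of_le (Nat.lt_succ_iff.1 hi) with hi | rfl
      · simpa [hi.le, Nat.succ_le_of_lt hi] using hx i hi
      · simpa [hxn] using hbc
  · rintro ⟨n, x, hn, rfl, rfl, hx⟩
    induction n, hn using Nat.le_induction with
    | base => exact .single (hx 0 one_pos)
    | succ n _ ih => exact (ih fun i hi => hx i (by omega)).tail (hx n (by omega))

section ChainStep

variable {X : Type*}

def ChainStep (f : X → X) (𝒰 : Set (Set X)) (x y : X) : Prop := ∃ U ∈ 𝒰, f x ∈ U ∧ y ∈ U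

theorem chainStep_apply_self {f : X → X} {𝒰 : Set (Set X)} (h𝒰 : univ ⊆ ⋃₀ 𝒰) (a : X) :
    ChainStep f 𝒰 a (f a) := by
  obtain ⟨U, hU, hfa⟩ := mem_sUnion.1 (h𝒰 (mem_univ (f a)))
  exact ⟨U, hU, hfa, hfa⟩

variable [TopologicalSpace X]

theorem chainTransitive_iff_forall_transGen (f : X → X) :
    ChainTransitive f ↔ ∀ a b : X, ∀ 𝒰 : Set (Set X), (∀ U ∈ 𝒰, IsOpen U) → univ ⊆ ⋃₀ 𝒰 →
      Relation.TransGen (ChainStep f 𝒰) a b := by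
  simp only [ChainTransitive, Relation.transGen_iff_exists_seq, ChainStep]

theorem mem_of_transGen_chainStep_pair_compl (f : X → X) {U : Set X} {a b : X}
    (h : Relation.TransGen (ChainStep f {U, (f '' closure U)ᶜ}) a b) (ha : a ∈ U) : b ∈ U := by
  induction h with
  | single hab => exact step ha hab
  | tail _ hbc ih => exact step ih hbc
where
  step {x y : X} (hx : x ∈ U) : ChainStep f {U, (f '' closure U)ᶜ} x y → y ∈ U := by
    rintro ⟨V, rfl | rfl, hfx, hy⟩
    · exact hy
    · exact absurd (mem_image_of_mem f (subset_closure hx)) hfx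

variable {f : X → X} {𝒰 : Set (Set X)}

theorem isOpen_setOf_transGen_chainStep (h𝒰 : ∀ U ∈ 𝒰, IsOpen U) (a : X) :
    IsOpen {c | Relation.TransGen (ChainStep f 𝒰) a c} := by
  refine isOpen_iff_forall_mem_open.2 fun c hc => ?_
  obtain ⟨d, hd, U, hU, hfd, hcU⟩ := Relation.TransGen.tail'_iff.1 hc
  exact ⟨U, fun c' hc' => .tail' hd ⟨U, hU, hfd, hc'⟩, h𝒰 U hU, hcU⟩

theorem image_closure_setOf_transGen_chainStep_subset (hf : Continuous f)
    (h𝒰 : ∀ U ∈ 𝒰, IsOpen U) (h𝒰_cover : univ ⊆ ⋃₀ 𝒰) (a : X) :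
    f '' closure {c | Relation.TransGen (ChainStep f 𝒰) a c} ⊆
      {c | Relation.TransGen (ChainStep f 𝒰) a c} := by
  rintro _ ⟨y, hy, rfl⟩
  obtain ⟨U, hU, hfy⟩ := mem_sUnion.1 (h𝒰_cover (mem_univ (f y)))
  obtain ⟨c, hcU, hc⟩ := mem_closure_iff.1 hy (f ⁻¹' U) ((h𝒰 U hU).preimage hf) hfy
  exact .tail hc ⟨U, hU, hcU, hfy⟩

end ChainStep

/-- A dynamical system is chain transitive iff it is weakly incompressible. -/
theorem chainTransitive_iff_weaklyIncompressible
    {X : Type u} [TopologicalSpace X] [CompactSpace X] [T2Space X]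
    (f : X → X) (hf : Continuous f) :
    ChainTransitive f ↔ WeaklyIncompressible f := by
  rw [chainTransitive_iff_forall_transGen]
  constructor
  · intro hct U hU ⟨a, ha⟩ hU_ne hfU
    obtain ⟨b, hb⟩ := (ne_univ_iff_exists_notMem U).1 hU_ne
    have hK : IsClosed (f '' closure U) := (isClosed_closure.isCompact.image hf).isClosed
    have hcover : univ ⊆ ⋃₀ {U, (f '' closure U)ᶜ} := fun x _ => by
      by_cases hx : x ∈ f '' closure U
      exacts [⟨U, .inl rfl, hfU hx⟩, ⟨_, .inr rfl, hx⟩]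
    refine hb (mem_of_transGen_chainStep_pair_compl f (hct a b _ ?_ hcover) ha)
    rintro V (rfl | rfl)
    exacts [hU, hK.isOpen_compl]
  · intro hwi a b 𝒰 h𝒰 h𝒰_cover
    by_contra hab
    exact hwi _ (isOpen_setOf_transGen_chainStep h𝒰 a)
      ⟨f a, .single (chainStep_apply_self h𝒰_cover a)⟩ ((ne_univ_iff_exists_notMem _).2 ⟨b, hab⟩)
      (image_closure_setOf_transGen_chainStep_subset hf h𝒰 h𝒰_cover a)
end

section
/- Let (X,f) be a dynamical system. If (X,f) is a quotient of (ω*,σ), then f is weakly incompressible. -/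
open Topology Set

/-!
Pulling back along the quotient map, it suffices to show that `σ` itself is weakly incompressible.
Let `V ⊆ ω*` be open and nonempty with `σ (cl V) ⊆ V`. By compactness of `cl V` and
zero-dimensionality of `ω*` there is `A ⊆ ℕ` with `cl V ⊆ A* ⊆ σ⁻¹ V`, where `A*` is the set of
free ultrafilters containing `A`. Then `A* ⊆ σ⁻¹ A* = (A - 1)*`, so only finitely many
`a ∈ A` have `a + 1 ∉ A`; as `A` is infinite (`A*` is nonempty), `A` is cofinite. Hence
`A* = ω*`, so `σ` maps `ω*` into `V`, and `V = ω*` because `σ` is onto.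
-/

open Filter Function

namespace Ultrafilter

variable {α : Type*}

theorem forall_ne_pure_iff_le_cofinite (p : Ultrafilter α) :
    (∀ a, p ≠ pure a) ↔ (p : Filter α) ≤ cofinite := by
  refine ⟨fun hp => (p.le_cofinite_or_eq_pure).resolve_right fun ⟨a, ha⟩ => hp a ha, ?_⟩
  rintro hp a rfl
  simpa using hp (show {a}ᶜ ∈ cofinite by simp)

theorem exists_le_cofinite_mem {s : Set α} (hs : s.Infinite) :
    ∃ p : Ultrafilter α, (p : Filter α) ≤ cofinite ∧ s ∈ p := by
  have := cofinite_inf_principal_neBot_iff.mpr hs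
  obtain ⟨p, hp⟩ := exists_le (cofinite ⊓ 𝓟 s)
  exact ⟨p, hp.trans inf_le_left, hp.trans inf_le_right (mem_principal_self s)⟩

theorem isClosed_setOf_forall_ne_pure : IsClosed {p : Ultrafilter α | ∀ a, p ≠ pure a} := by
  have : {p : Ultrafilter α | ∀ a, p ≠ pure a} = ⋂ s ∈ (cofinite : Filter α), {p | s ∈ p} := by
    ext p
    simp [forall_ne_pure_iff_le_cofinite, Filter.le_def]
  rw [this]
  exact isClosed_biInter fun s _ => ultrafilter_isClosed_basic s

theorem continuous_map {β : Type*} (m : α → β) : Continuous (Ultrafilter.map m) := by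
  refine ultrafilterBasis_is_basis.continuous_iff.mpr ?_
  rintro _ ⟨s, rfl⟩
  exact ultrafilter_isOpen_basic (m ⁻¹' s)

end Ultrafilter

theorem Nat.compl_finite_of_finite_diff_preimage_succ {A : Set ℕ} (hA : A.Infinite)
    (hfin : (A \ (· + 1) ⁻¹' A).Finite) : Aᶜ.Finite := by
  obtain ⟨N, hN⟩ := hfin.bddAbove
  obtain ⟨a, haA, hNa⟩ := hA.exists_gt N
  have htail : ∀ m, a ≤ m → m ∈ A := by
    refine Nat.le_induction haA fun m ham hmA => ?_
    by_contra hm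
    exact absurd (hN ⟨hmA, hm⟩) (by omega)
  exact (Set.finite_Iio a).subset fun m hm => not_le.mp fun ham => hm (htail m ham)

instance : CompactSpace OmegaStar :=
  isCompact_iff_compactSpace.mp Ultrafilter.isClosed_setOf_forall_ne_pure.isCompact

namespace OmegaStar

theorem le_cofinite (p : OmegaStar) : (p.1 : Filter ℕ) ≤ cofinite :=
  (p.1.forall_ne_pure_iff_le_cofinite).mp p.2

/-- The basic clopen set `A* = cl_{βℕ} A ∩ ω*`. -/
def basicSet (A : Set ℕ) : Set OmegaStar := {p | A ∈ p.1}

theorem isOpen_basicSet (A : Set ℕ) : IsOpen (basicSet A) :=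
  (ultrafilter_isOpen_basic A).preimage continuous_subtype_val

theorem basicSet_union (A B : Set ℕ) : basicSet (A ∪ B) = basicSet A ∪ basicSet B :=
  Set.ext fun _ => Ultrafilter.union_mem_iff

theorem basicSet_eq_univ {A : Set ℕ} (hA : Aᶜ.Finite) : basicSet A = Set.univ :=
  Set.eq_univ_of_forall fun p => p.le_cofinite (mem_cofinite.mpr hA)

theorem infinite_of_basicSet_nonempty {A : Set ℕ} (h : (basicSet A).Nonempty) : A.Infinite := by
  rintro hfin
  obtain ⟨p, hp⟩ := h
  obtain ⟨a, -, ha⟩ := Ultrafilter.eq_pure_of_finite_mem hfin hp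
  exact p.2 a ha

theorem finite_diff_of_basicSet_subset {A B : Set ℕ} (h : basicSet A ⊆ basicSet B) :
    (A \ B).Finite := by
  by_contra hinf
  obtain ⟨p, hp, hAB⟩ := Ultrafilter.exists_le_cofinite_mem hinf
  have hB : B ∈ p := h (a := ⟨p, (p.forall_ne_pure_iff_le_cofinite).mpr hp⟩)
    (mem_of_superset hAB Set.sdiff_subset)
  exact Ultrafilter.compl_notMem_iff.mpr hB (mem_of_superset hAB fun _ hx => hx.2)

theorem exists_basicSet_mem_subset {W : Set OmegaStar} (hW : IsOpen W) {p : OmegaStar}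
    (hp : p ∈ W) : ∃ A, p ∈ basicSet A ∧ basicSet A ⊆ W := by
  obtain ⟨_, ⟨_, ⟨A, rfl⟩, rfl⟩, hpA, hAW⟩ :=
    (ultrafilterBasis_is_basis.isInducing Topology.IsInducing.subtypeVal).exists_subset_of_mem_open
      hp hW
  exact ⟨A, hpA, hAW⟩

theorem exists_basicSet_between {K W : Set OmegaStar} (hK : IsCompact K) (hW : IsOpen W)
    (hKW : K ⊆ W) : ∃ A, K ⊆ basicSet A ∧ basicSet A ⊆ W := by
  refine hK.induction_on (p := fun S => ∃ A, S ⊆ basicSet A ∧ basicSet A ⊆ W)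
    ⟨∅, Set.empty_subset _, fun q hq => absurd hq (Ultrafilter.empty_notMem (f := q.1))⟩
    (fun S T hST ⟨A, hTA, hAW⟩ => ⟨A, hST.trans hTA, hAW⟩)
    (fun S T ⟨A, hSA, hAW⟩ ⟨B, hTB, hBW⟩ =>
      ⟨A ∪ B, basicSet_union A B ▸ Set.union_subset_union hSA hTB,
        basicSet_union A B ▸ Set.union_subset hAW hBW⟩)
    fun p hp => ?_
  obtain ⟨A, hpA, hAW⟩ := exists_basicSet_mem_subset hW (hKW hp)
  exact ⟨basicSet A, mem_nhdsWithin_of_mem_nhds ((isOpen_basicSet A).mem_nhds hpA),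
    A, subset_rfl, hAW⟩

end OmegaStar

open OmegaStar

theorem continuous_shiftMap : Continuous shiftMap :=
  ((Ultrafilter.continuous_map _).comp continuous_subtype_val).subtype_mk _

theorem preimage_shiftMap_basicSet (A : Set ℕ) :
    shiftMap ⁻¹' basicSet A = basicSet ((· + 1) ⁻¹' A) :=
  rfl

theorem shiftMap_surjective : Surjective shiftMap := by
  intro p
  have hpred : Tendsto (· - 1) (p.1 : Filter ℕ) cofinite := by
    rw [Nat.cofinite_eq_atTop]
    exact (tendsto_sub_atTop_nat 1).mono_left (Nat.cofinite_eq_atTop ▸ p.le_cofinite)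
  refine ⟨⟨p.1.map (· - 1), (Ultrafilter.forall_ne_pure_iff_le_cofinite _).mpr hpred⟩, ?_⟩
  have hinv : (fun n => n - 1 + 1) =ᶠ[(p.1 : Filter ℕ)] id :=
    Filter.mem_of_superset (p.le_cofinite (Set.finite_singleton 0).compl_mem_cofinite)
      fun n hn => Nat.sub_add_cancel (Nat.one_le_iff_ne_zero.mpr hn)
  refine Subtype.ext (Ultrafilter.coe_injective ?_)
  simp only [shiftMap, Ultrafilter.map_map, Ultrafilter.coe_map]
  exact (map_congr hinv).trans map_id

theorem WeaklyIncompressible.of_semiconj {Y X : Type*} [TopologicalSpace Y] [TopologicalSpace X]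
    {g : Y → Y} {f : X → X} (hg : WeaklyIncompressible g) {Q : Y → X} (hQc : Continuous Q)
    (hQs : Surjective Q) (hQ : Semiconj Q g f) : WeaklyIncompressible f := by
  intro U hU hne hne_univ hfU
  refine hg (Q ⁻¹' U) (hU.preimage hQc) (hne.preimage hQs)
    (fun h => hne_univ (hQs.preimage_injective h)) ?_
  rintro _ ⟨p, hp, rfl⟩
  show Q (g p) ∈ U
  rw [hQ p]
  exact hfU ⟨Q p, hQc.closure_preimage_subset U hp, rfl⟩

theorem weaklyIncompressible_shiftMap : WeaklyIncompressible shiftMap := by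
  intro V hV hne hne_univ hσV
  obtain ⟨A, hVA, hAV⟩ := exists_basicSet_between isClosed_closure.isCompact
    (hV.preimage continuous_shiftMap) (Set.image_subset_iff.mp hσV)
  have hA_shift : basicSet A ⊆ basicSet ((· + 1) ⁻¹' A) := by
    rw [← preimage_shiftMap_basicSet]
    exact hAV.trans (Set.preimage_mono (subset_closure.trans hVA))
  have hA_cofinite : Aᶜ.Finite :=
    Nat.compl_finite_of_finite_diff_preimage_succ
      (infinite_of_basicSet_nonempty (hne.mono (subset_closure.trans hVA)))
      (finite_diff_of_basicSet_subset hA_shift)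
  refine hne_univ (Set.eq_univ_of_forall fun p => ?_)
  obtain ⟨q, rfl⟩ := shiftMap_surjective p
  exact hAV (basicSet_eq_univ hA_cofinite ▸ Set.mem_univ q)

theorem weaklyIncompressible_of_isQuotientOfShift_general
    {X : Type u} [TopologicalSpace X]
    (f : X → X) (h : IsQuotientOfShift f) :
    WeaklyIncompressible f := by
  obtain ⟨Q, hQc, hQs, hQ⟩ := h
  exact weaklyIncompressible_shiftMap.of_semiconj hQc hQs hQ

/-- Every quotient of `(ω*, σ)` is weakly incompressible. -/
theorem weaklyIncompressible_of_isQuotientOfShift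
    {X : Type u} [TopologicalSpace X] [CompactSpace X] [T2Space X]
    (f : X → X) (hf : Continuous f) (h : IsQuotientOfShift f) :
    WeaklyIncompressible f :=
  weaklyIncompressible_of_isQuotientOfShift_general f h
end

section
/- Let X be a compact Hausdorff space and f : X → X a homeomorphism. Then f is weakly incompressible if and only if f⁻¹ is weakly incompressible. -/
open Set

variable {X : Type*} [TopologicalSpace X]

lemma image_closure_compl_closure_subset {f : X → X} {U : Set X} (hU : IsOpen U)
    (h : f ⁻¹' closure U ⊆ U) : f '' closure (closure U)ᶜ ⊆ (closure U)ᶜ := by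
  have hclosure : closure (closure U)ᶜ ⊆ Uᶜ :=
    closure_minimal (compl_subset_compl.mpr subset_closure) hU.isClosed_compl
  rintro _ ⟨x, hx, rfl⟩ hfx
  exact hclosure hx (h hfx)

lemma WeaklyIncompressible.symm {f : X ≃ₜ X} (hf : WeaklyIncompressible (f : X → X)) :
    WeaklyIncompressible (f.symm : X → X) := by
  intro U hU hne hne_univ hsub
  rw [f.image_symm] at hsub
  refine hf (closure U)ᶜ isClosed_closure.isOpen_compl ?_ ?_
    (image_closure_compl_closure_subset hU hsub)
  · refine nonempty_compl.mpr fun hdense => hne_univ (eq_univ_of_univ_subset ?_)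
    simpa [hdense] using hsub
  · exact fun hempty => hne.ne_empty ((closure_empty_iff U).mp (compl_univ_iff.mp hempty))

theorem weaklyIncompressible_iff_weaklyIncompressible_symm_general
    {X : Type u} [TopologicalSpace X] (f : X ≃ₜ X) :
    WeaklyIncompressible (f : X → X) ↔ WeaklyIncompressible (f.symm : X → X) :=
  ⟨WeaklyIncompressible.symm, fun h => by simpa using h.symm⟩

/-- A homeomorphism of a compact Hausdorff space is weakly incompressible iff
its inverse is. -/
theorem weaklyIncompressible_iff_weaklyIncompressible_symm
    {X : Type u} [TopologicalSpace X] [CompactSpace X] [T2Space X] (f : X ≃ₜ X) :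
    WeaklyIncompressible (f : X → X) ↔ WeaklyIncompressible (f.symm : X → X) :=
  weaklyIncompressible_iff_weaklyIncompressible_symm_general f
end

section
/- Let κ be an infinite cardinal and let Y be a nonempty compact Hausdorff space of weight κ. Then there exist a compact Hausdorff space X of weight κ, a weakly incompressible continuous map f : X → X, and a topological embedding e : Y → X whose image e(Y) is clopen in X. -/
open Topology

/-!
Take `X` to be the one-point compactification of `Y × ℤ` and `f` the shift `(y, n) ↦ (y, n + 1)`
fixing `∞`; `Y` sits in `X` as the clopen slice `Y × {0}`. Suppose `f (cl U) ⊆ U` for an open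
`U` with `∅ ≠ U ≠ X`. If `∞ ∈ U`, the complement of `U` is a nonempty compact subset of `Y × ℤ`;
the predecessor of one of its points of minimal height lies in `U` but is mapped out of `U`.
If `∞ ∉ U`, then `∞ ∉ cl U` because `f ∞ = ∞`, so `cl U` is a nonempty compact subset of `Y × ℤ`
and a point of maximal height in it is mapped out of `cl U`. As for the weight, `Y × ℤ` has
weight at most `κ · ℵ₀ = κ`, and compactifying adds only countably many basic neighbourhoods of
`∞`, the complements of the sets of a compact exhaustion.
-/

open Set TopologicalSpace OnePoint Cardinal

universe u v

section Weight

variable {α : Type u} {β : Type v} [TopologicalSpace α] [TopologicalSpace β]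

lemma tweight_le_mk {B : Set (Set α)} (hB : IsTopologicalBasis B) : tweight α ≤ #B :=
  ciInf_le' _ (⟨B, hB⟩ : {B : Set (Set α) // IsTopologicalBasis B})

lemma exists_isTopologicalBasis_mk_eq_tweight (X : Type*) [TopologicalSpace X] :
    ∃ B : Set (Set X), IsTopologicalBasis B ∧ #B = tweight X := by
  have : Nonempty {B : Set (Set X) // IsTopologicalBasis B} := ⟨⟨_, isTopologicalBasis_opens⟩⟩
  obtain ⟨B, hB⟩ := ciInf_mem fun B : {B : Set (Set X) // IsTopologicalBasis B} => #B.1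
  exact ⟨B.1, B.2, hB⟩

lemma Topology.IsEmbedding.tweight_le {γ : Type u} [TopologicalSpace γ]
    {e : α → γ} (he : IsEmbedding e) : tweight α ≤ tweight γ := by
  obtain ⟨B, hB, hBw⟩ := exists_isTopologicalBasis_mk_eq_tweight γ
  calc tweight α ≤ #((e ⁻¹' ·) '' B) := tweight_le_mk (hB.isInducing he.isInducing)
    _ ≤ #B := mk_image_le
    _ = tweight γ := hBw

lemma tweight_le_mk_of_discreteTopology [DiscreteTopology α] : tweight α ≤ #α :=
  calc tweight α ≤ #{s : Set α | ∃ x, s = {x}} := tweight_le_mk (isTopologicalBasis_singletons α)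
    _ ≤ #(range fun x : α => ({x} : Set α)) :=
      mk_le_mk_of_subset fun _ ⟨x, hx⟩ => ⟨x, hx.symm⟩
    _ ≤ #α := mk_range_le

lemma tweight_prod_le : tweight (α × β) ≤ lift.{v} (tweight α) * lift.{u} (tweight β) := by
  obtain ⟨B₁, hB₁, h₁⟩ := exists_isTopologicalBasis_mk_eq_tweight α
  obtain ⟨B₂, hB₂, h₂⟩ := exists_isTopologicalBasis_mk_eq_tweight β
  calc tweight (α × β) ≤ #(image2 (· ×ˢ ·) B₁ B₂) := tweight_le_mk (hB₁.prod hB₂)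
    _ ≤ #(range fun p : B₁ × B₂ => p.1.1 ×ˢ p.2.1) :=
      mk_le_mk_of_subset fun _ ⟨s, hs, t, ht, h⟩ => ⟨(⟨s, hs⟩, ⟨t, ht⟩), h⟩
    _ ≤ #(B₁ × B₂) := mk_range_le
    _ = lift.{v} (tweight α) * lift.{u} (tweight β) := by rw [mk_prod, h₁, h₂]

lemma tweight_onePoint_le [T2Space α] [WeaklyLocallyCompactSpace α] [SigmaCompactSpace α] :
    tweight (OnePoint α) ≤ tweight α + ℵ₀ := by
  obtain ⟨B, hB, hBw⟩ := exists_isTopologicalBasis_mk_eq_tweight α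
  let K := CompactExhaustion.choice α
  have hbasis : IsTopologicalBasis
      ((((↑) : α → OnePoint α) '' ·) '' B ∪ range fun n => ((↑) '' K n : Set (OnePoint α))ᶜ) := by
    refine isTopologicalBasis_of_isOpen_of_nhds ?_ ?_
    · rintro v (⟨s, hs, rfl⟩ | ⟨n, rfl⟩)
      · exact isOpen_image_coe.2 (hB.isOpen hs)
      · exact isOpen_compl_image_coe.2 ⟨(K.isCompact n).isClosed, K.isCompact n⟩
    · intro x u hx hu
      induction x using OnePoint.rec with
      | infty =>
        obtain ⟨n, hn⟩ := K.exists_superset_of_isCompact ((isOpen_iff_of_mem' hx).1 hu).1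
        refine ⟨_, Or.inr ⟨n, rfl⟩, infty_notMem_image_coe, compl_subset_comm.1 fun y hy => ?_⟩
        induction y using OnePoint.rec with
        | infty => exact absurd hx hy
        | coe z => exact mem_image_of_mem _ (hn hy)
      | coe z =>
        obtain ⟨s, hs, hzs, hsu⟩ :=
          hB.exists_subset_of_mem_open hx (hu.preimage continuous_coe)
        exact ⟨_, Or.inl ⟨s, hs, rfl⟩, mem_image_of_mem _ hzs, image_subset_iff.2 hsu⟩
  calc tweight (OnePoint α) ≤ #_ := tweight_le_mk hbasis
    _ ≤ _ := mk_union_le _ _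
    _ ≤ tweight α + ℵ₀ :=
      add_le_add (hBw ▸ mk_image_le) (mk_le_aleph0_iff.2 (countable_range _).to_subtype)

end Weight

theorem Homeomorph.weaklyIncompressible_onePointCongr {Z : Type*} [TopologicalSpace Z]
    (g : Z ≃ₜ Z) {h : Z → ℤ} (hh : Continuous h) (hg : ∀ z, h (g z) = h z + 1) :
    WeaklyIncompressible g.onePointCongr := by
  intro U hU hUne hUuniv hgU
  by_cases hU_infty : ∞ ∈ U
  · have hK : IsCompact ((↑) ⁻¹' U : Set Z)ᶜ := ((isOpen_iff_of_mem' hU_infty).1 hU).1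
    have hKne : ((↑) ⁻¹' U : Set Z)ᶜ.Nonempty := by
      obtain ⟨x, hx⟩ := (ne_univ_iff_exists_notMem U).1 hUuniv
      induction x using OnePoint.rec with
      | infty => exact absurd hU_infty hx
      | coe z => exact ⟨z, hx⟩
    obtain ⟨z, hzK, hz_min⟩ := hK.exists_isMinOn hKne hh.continuousOn
    have hpred : (g.symm z : OnePoint Z) ∈ U := by
      by_contra hnot
      have h_le : h z ≤ h (g.symm z) := isMinOn_iff.1 hz_min _ hnot
      have h_succ := hg (g.symm z)
      rw [g.apply_symm_apply] at h_succ
      omega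
    have hz : ((g (g.symm z) : Z) : OnePoint Z) ∈ U := hgU ⟨_, subset_closure hpred, rfl⟩
    exact hzK (by rwa [g.apply_symm_apply] at hz)
  · have hclU_infty : ∞ ∉ closure U := fun h => hU_infty (hgU ⟨∞, h, rfl⟩)
    have hC : IsCompact ((↑) ⁻¹' closure U : Set Z) :=
      ((isClosed_iff_of_notMem hclU_infty).1 isClosed_closure).2
    have hCne : ((↑) ⁻¹' closure U : Set Z).Nonempty := by
      obtain ⟨x, hx⟩ := hUne
      induction x using OnePoint.rec with
      | infty => exact absurd hx hU_infty
      | coe z => exact ⟨z, subset_closure hx⟩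
    obtain ⟨z, hzC, hz_max⟩ := hC.exists_isMaxOn hCne hh.continuousOn
    have hsucc : g z ∈ ((↑) ⁻¹' closure U : Set Z) := subset_closure (hgU ⟨_, hzC, rfl⟩)
    have h_le : h (g z) ≤ h z := isMaxOn_iff.1 hz_max _ hsucc
    rw [hg] at h_le
    omega

theorem exists_weaklyIncompressible_clopen_embedding_general
    {Y : Type u} [TopologicalSpace Y] [CompactSpace Y] [T2Space Y]
    (κ : Cardinal.{u}) (hκ : Cardinal.aleph0 ≤ κ) (hw : tweight Y = κ) :
    ∃ (X : Type u) (_ : TopologicalSpace X) (_ : CompactSpace X) (_ : T2Space X)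
      (f : X → X) (e : Y → X),
      tweight X = κ ∧ Continuous f ∧ WeaklyIncompressible f ∧
      IsEmbedding e ∧ IsClopen (Set.range e) := by
  let shift : Y × ℤ ≃ₜ Y × ℤ := (Homeomorph.refl Y).prodCongr (Homeomorph.addRight 1)
  let e : Y → OnePoint (Y × ℤ) := fun y => ↑(y, (0 : ℤ))
  have he : IsEmbedding e := isOpenEmbedding_coe.isEmbedding.comp (isEmbedding_prodMkLeft 0)
  have he_range : range e = (↑) '' (Prod.snd ⁻¹' {0} : Set (Y × ℤ)) := by
    ext x
    simp [e]
  have h_weight : tweight (OnePoint (Y × ℤ)) = κ := by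
    refine le_antisymm ?_ (hw ▸ he.tweight_le)
    calc tweight (OnePoint (Y × ℤ)) ≤ tweight (Y × ℤ) + ℵ₀ := tweight_onePoint_le
      _ ≤ lift.{0} (tweight Y) * lift.{u} (tweight ℤ) + ℵ₀ := by gcongr; exact tweight_prod_le
      _ ≤ κ * ℵ₀ + ℵ₀ := by
        gcongr
        · rw [lift_uzero, hw]
        · exact (lift_le.2 (tweight_le_mk_of_discreteTopology.trans_eq mk_int)).trans_eq lift_aleph0
      _ = κ := by rw [Cardinal.mul_eq_left hκ hκ aleph0_ne_zero, Cardinal.add_eq_left hκ hκ]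
  refine ⟨OnePoint (Y × ℤ), inferInstance, inferInstance, inferInstance, shift.onePointCongr, e,
    h_weight, shift.onePointCongr.continuous,
    shift.weaklyIncompressible_onePointCongr continuous_snd fun _ => rfl, he,
    (isCompact_range he.continuous).isClosed, ?_⟩
  rw [he_range]
  exact isOpen_image_coe.2 ((isOpen_discrete _).preimage continuous_snd)

/-- Every nonempty compact Hausdorff space `Y` of infinite weight `κ` embeds as a
clopen subset of a compact Hausdorff space `X` of weight `κ` carrying a weakly
incompressible continuous self-map. -/
theorem exists_weaklyIncompressible_clopen_embedding
    {Y : Type u} [TopologicalSpace Y] [CompactSpace Y] [T2Space Y] [Nonempty Y]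
    (κ : Cardinal.{u}) (hκ : Cardinal.aleph0 ≤ κ) (hw : tweight Y = κ) :
    ∃ (X : Type u) (_ : TopologicalSpace X) (_ : CompactSpace X) (_ : T2Space X)
      (f : X → X) (e : Y → X),
      tweight X = κ ∧ Continuous f ∧ WeaklyIncompressible f ∧
      IsEmbedding e ∧ IsClopen (Set.range e) :=
  exists_weaklyIncompressible_clopen_embedding_general κ hκ hw
end

section
/- Let κ be an infinite cardinal. Suppose that every dynamical system (X,f) with X nonempty, the weight of X at most κ, and f weakly incompressible is a quotient of (ω*,σ). Then every nonempty compact Hausdorff space of weight at most κ is a continuous image of ω*, i.e., admits a continuous surjection from ω*. -/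
open Topology Set

/-!
Apply the hypothesis to the shift on `Y^ℕ`, a compact Hausdorff space of weight at most `κ`.
The shift is weakly incompressible: an open set `U` with `σ(cl U) ⊆ U` is forward invariant, but
a nonempty open set depends on finitely many coordinates, so some iterate of the shift maps it onto
all of `Y^ℕ`. The `0`-th coordinate of the resulting quotient map `ω* → Y^ℕ` is onto `Y`, as the
constant sequences are hit.
-/

open TopologicalSpace

section weight

open Cardinal

theorem tweight_le_iff_exists_isTopologicalBasis {X : Type u} [TopologicalSpace X]
    {κ : Cardinal.{u}} : tweight X ≤ κ ↔ ∃ B : Set (Set X), IsTopologicalBasis B ∧ #B ≤ κ := by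
  refine ⟨fun h => ?_, fun ⟨B, hB, hBκ⟩ =>
    (ciInf_le' _ (⟨B, hB⟩ : {B // IsTopologicalBasis B})).trans hBκ⟩
  have : Nonempty {B : Set (Set X) // IsTopologicalBasis B} := ⟨⟨_, isTopologicalBasis_opens⟩⟩
  obtain ⟨⟨B, hB⟩, hBeq⟩ := ciInf_mem fun B : {B : Set (Set X) // IsTopologicalBasis B} => #B.1
  exact ⟨B, hB, hBeq.trans_le h⟩

theorem tweight_pi_le {ι : Type v} [Countable ι] {Y : ι → Type u} [∀ i, TopologicalSpace (Y i)]
    {κ : Cardinal.{u}} (hκ : ℵ₀ ≤ κ) (h : ∀ i, tweight (Y i) ≤ κ) :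
    tweight (∀ i, Y i) ≤ lift.{v} κ := by
  classical
  choose B hB hBκ using fun i => tweight_le_iff_exists_isTopologicalBasis.1 (h i)
  refine tweight_le_iff_exists_isTopologicalBasis.2 ⟨_, isTopologicalBasis_pi hB, ?_⟩
  let cylinder (s : Finset (Σ i, B i)) : Set (∀ i, Y i) := ⋂ p ∈ s, Function.eval p.1 ⁻¹' p.2
  have hsub : { S | ∃ (U : ∀ i, Set (Y i)) (F : Finset ι),
      (∀ i, i ∈ F → U i ∈ B i) ∧ S = (F : Set ι).pi U } ⊆ range cylinder := by
    rintro S ⟨U, F, hU, rfl⟩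
    refine ⟨F.attach.image fun i => ⟨i.1, U i.1, hU i.1 i.2⟩, ?_⟩
    ext x
    simp only [cylinder, mem_iInter, Finset.mem_image, Finset.mem_attach, true_and, mem_pi,
      Finset.mem_coe, mem_preimage]
    exact ⟨fun hx i hi => hx _ ⟨⟨i, hi⟩, rfl⟩, fun hx _ ⟨i, hp⟩ => hp ▸ hx i.1 i.2⟩
  have hκ' : ℵ₀ ≤ lift.{v} κ := aleph0_le_lift.2 hκ
  have hsigma : #(Σ i, B i) ≤ lift.{v} κ := calc
    #(Σ i, B i) ≤ lift #ι * ⨆ i, lift #(B i) := mk_sigma _ ▸ sum_le_lift_mk_mul_iSup_lift _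
    _ ≤ lift κ * lift κ := mul_le_mul' (lift_le_aleph0.2 mk_le_aleph0 |>.trans hκ')
      (ciSup_le' fun i => lift_le.2 (hBκ i))
    _ = lift κ := mul_eq_self hκ'
  calc _ ≤ #(range cylinder) := mk_le_mk_of_subset hsub
    _ ≤ #(Finset (Σ i, B i)) := mk_range_le
    _ ≤ #(List (Σ i, B i)) := mk_le_of_surjective List.toFinset_surjective
    _ ≤ max ℵ₀ #(Σ i, B i) := mk_list_le_max _
    _ ≤ lift κ := max_le hκ' hsigma

end weight

theorem weaklyIncompressible_of_exists_iterate_image_eq_univ {X : Type*} [TopologicalSpace X]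
    {f : X → X} (h : ∀ U : Set X, IsOpen U → U.Nonempty → ∃ n, f^[n] '' U = univ) :
    WeaklyIncompressible f := by
  intro U hU hne hne_univ hsub
  obtain ⟨n, hn⟩ := h U hU hne
  have hmaps : MapsTo f U U := fun x hx => hsub ⟨x, subset_closure hx, rfl⟩
  exact hne_univ (univ_subset_iff.1 (hn ▸ (hmaps.iterate n).image_subset))

section seqShift

variable {Y : Type*}

def seqShift (x : ℕ → Y) : ℕ → Y := fun k => x (k + 1)

theorem seqShift_iterate_apply (n : ℕ) (x : ℕ → Y) (k : ℕ) :
    seqShift^[n] x k = x (k + n) := by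
  induction n generalizing x with
  | zero => rfl
  | succ n ih => rw [Function.iterate_succ_apply, ih]; rfl

variable [TopologicalSpace Y]

theorem continuous_seqShift : Continuous (seqShift : (ℕ → Y) → ℕ → Y) :=
  continuous_pi fun k => continuous_apply (k + 1)

theorem IsOpen.exists_forall_eq_lt_mem {U : Set (ℕ → Y)} (hU : IsOpen U) {x : ℕ → Y}
    (hx : x ∈ U) : ∃ n, ∀ w : ℕ → Y, (∀ k < n, w k = x k) → w ∈ U := by
  obtain ⟨I, u, hu, hIu⟩ := isOpen_pi_iff.1 hU x hx
  obtain ⟨n, hn⟩ := I.exists_nat_subset_range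
  refine ⟨n, fun w hw => hIu fun k hk => ?_⟩
  rw [hw k (Finset.mem_range.1 (hn hk))]
  exact (hu k hk).2

theorem seqShift_exists_iterate_image_eq_univ {U : Set (ℕ → Y)} (hU : IsOpen U)
    (hne : U.Nonempty) : ∃ n, seqShift^[n] '' U = univ := by
  obtain ⟨x, hx⟩ := hne
  obtain ⟨n, hn⟩ := hU.exists_forall_eq_lt_mem hx
  refine ⟨n, eq_univ_of_forall fun z => ⟨fun k => if k < n then x k else z (k - n),
    hn _ fun k hk => if_pos hk, funext fun k => ?_⟩⟩
  simp [seqShift_iterate_apply]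

theorem weaklyIncompressible_seqShift :
    WeaklyIncompressible (seqShift : (ℕ → Y) → ℕ → Y) :=
  weaklyIncompressible_of_exists_iterate_image_eq_univ fun _ =>
    seqShift_exists_iterate_image_eq_univ

end seqShift

/-- If every nonempty weakly incompressible dynamical system of weight at most `κ`
is a quotient of `(ω*, σ)`, then every nonempty compact Hausdorff space of weight
at most `κ` is a continuous image of `ω*`. -/
theorem continuous_image_of_quotient_hypothesis
    (κ : Cardinal.{u}) (hκ : Cardinal.aleph0 ≤ κ)
    (H : ∀ (X : Type u) [TopologicalSpace X] [CompactSpace X] [T2Space X] [Nonempty X]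
      (f : X → X), Continuous f → tweight X ≤ κ → WeaklyIncompressible f →
        IsQuotientOfShift f) :
    ∀ (Y : Type u) [TopologicalSpace Y] [CompactSpace Y] [T2Space Y] [Nonempty Y],
      tweight Y ≤ κ → ∃ g : OmegaStar → Y, Continuous g ∧ Function.Surjective g := by
  intro Y _ _ _ _ hY
  obtain ⟨Q, hQ, hQ_surj, -⟩ := H (ℕ → Y) seqShift continuous_seqShift
    (Cardinal.lift_uzero κ ▸ tweight_pi_le hκ fun _ => hY) weaklyIncompressible_seqShift
  refine ⟨fun p => Q p 0, (continuous_apply 0).comp hQ, fun y => ?_⟩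
  obtain ⟨p, hp⟩ := hQ_surj fun _ => y
  exact ⟨p, congrFun hp 0⟩
end

section
/- Every nonempty compact Hausdorff space of weight at most ℵ₁ is a continuous image of ω*, i.e., admits a continuous surjection from ω*. -/
open Topology Set

/-!
For each basic open set `U` of `Y`, cover `Y` by the closed sets `closure U` and `Uᶜ`. Along a
well-order of the base in which every initial segment is countable, choose sets `e U ⊆ ℕ` so that a
finite intersection of these closed sets is empty exactly when the corresponding Boolean
combination of the sets `e U` is finite. Each step has to meet only countably many finiteness and
infiniteness requirements, and `𝒫(ℕ)/fin` allows this: if every set of a countable family `A` is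
almost disjoint from every set of a countable family `B`, some `y` is almost disjoint from each
member of `A` and almost contains each member of `B`, and `y` can moreover be made to meet, and to
miss, countably many prescribed sets in infinite sets. A free ultrafilter `p` then picks one of
the two closed sets for every `U`; by compactness their intersection is nonempty, by regularity it
is a single point `g p`, and `g : ω* → Y` is continuous and onto.
-/

open Filter Function TopologicalSpace
open scoped Cardinal

namespace Parovicenko

variable {κ α X : Type*}

def cell (C : κ → Bool → Set α) (F : Finset κ) (ε : κ → Bool) : Set α := ⋂ i ∈ F, C i (ε i)

def literal (e : κ → Set ℕ) (i : κ) (b : Bool) : Set ℕ := cond b (e i) (e i)ᶜ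

def FaithfulOn (C : κ → Bool → Set X) (e : κ → Set ℕ) (S : Set κ) : Prop :=
  ∀ (F : Finset κ) (ε : κ → Bool), ↑F ⊆ S → (cell C F ε = ∅ ↔ (cell (literal e) F ε).Finite)

section Cell

variable {C : κ → Bool → Set α} {F G : Finset κ} {ε δ : κ → Bool}

@[simp]
lemma cell_empty : cell C ∅ ε = univ := by simp [cell]

lemma mem_cell {z : α} : z ∈ cell C F ε ↔ ∀ i ∈ F, z ∈ C i (ε i) := mem_iInter₂

lemma cell_congr (h : ∀ i ∈ F, ε i = δ i) : cell C F ε = cell C F δ :=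
  iInter₂_congr fun i hi => by rw [h i hi]

lemma cell_subset_cell (h : F ⊆ G) : cell C G ε ⊆ cell C F ε :=
  biInter_subset_biInter_left (Finset.coe_subset.2 h)

lemma cell_subset_of_mem {i : κ} (hi : i ∈ F) : cell C F ε ⊆ C i (ε i) :=
  biInter_subset_of_mem hi

lemma cell_insert [DecidableEq κ] (i : κ) : cell C (insert i F) ε = C i (ε i) ∩ cell C F ε := by
  simp [cell]

lemma cell_inter_cell [DecidableEq κ] (h : ∀ i ∈ F, i ∈ G → ε i = δ i) :
    cell C F ε ∩ cell C G δ = cell C (F ∪ G) (F.piecewise ε δ) := by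
  have hF : cell C F ε = cell C F (F.piecewise ε δ) :=
    cell_congr fun i hi => (F.piecewise_eq_of_mem _ _ hi).symm
  have hG : cell C G δ = cell C G (F.piecewise ε δ) := cell_congr fun i hi => by
    by_cases hiF : i ∈ F
    · rw [F.piecewise_eq_of_mem _ _ hiF, h i hiF hi]
    · rw [F.piecewise_eq_of_notMem _ _ hiF]
  rw [hF, hG, cell, cell, cell, Finset.set_biInter_inter]

lemma directed_cell : Directed (· ⊇ ·) (cell C · ε) := by
  classical
  exact fun F G => ⟨F ∪ G, cell_subset_cell Finset.subset_union_left,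
    cell_subset_cell Finset.subset_union_right⟩

lemma isClosed_cell [TopologicalSpace α] (hC : ∀ i b, IsClosed (C i b)) : IsClosed (cell C F ε) :=
  isClosed_biInter fun i _ => hC i (ε i)

lemma exists_pattern_of_mem_cell (hcov : ∀ i, C i true ∪ C i false = univ) {z : α}
    (hz : z ∈ cell C F ε) : ∃ δ : κ → Bool, (∀ i ∈ F, δ i = ε i) ∧ ∀ i, z ∈ C i (δ i) := by
  classical
  refine ⟨F.piecewise ε fun i => decide (z ∈ C i true),
    fun i hi => F.piecewise_eq_of_mem _ _ hi, fun i => ?_⟩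
  by_cases hi : i ∈ F
  · rw [F.piecewise_eq_of_mem _ _ hi]
    exact mem_cell.1 hz i hi
  · rw [F.piecewise_eq_of_notMem _ _ hi]
    by_cases hzi : z ∈ C i true
    · simp [hzi]
    · have hz' : z ∈ C i true ∪ C i false := (hcov i).symm ▸ mem_univ z
      simpa [hzi] using hz'

end Cell

lemma disjoint_cell_literal {e : κ → Set ℕ} {F G : Finset κ} {ε δ : κ → Bool} {i : κ}
    (hF : i ∈ F) (hG : i ∈ G) (h : ε i ≠ δ i) :
    Disjoint (cell (literal e) F ε) (cell (literal e) G δ) := by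
  refine Disjoint.mono (cell_subset_of_mem hF) (cell_subset_of_mem hG) ?_
  cases hε : ε i <;> cases hδ : δ i <;>
    simp_all [literal, disjoint_compl_left, disjoint_compl_right]

lemma exists_separating_of_finite_inter {A B : ℕ → Set ℕ} (hAB : ∀ m n, (A m ∩ B n).Finite) :
    ∃ y, (∀ m, (A m ∩ y).Finite) ∧ ∀ n, (B n \ y).Finite := by
  refine ⟨⋃ n, B n \ ⋃ m ≤ n, A m, fun m => ?_, fun n => ?_⟩
  · refine ((finite_lt_nat m).biUnion fun n _ => hAB m n).subset ?_
    rintro x ⟨hxA, hxy⟩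
    obtain ⟨n, hxB, hx⟩ := mem_iUnion.1 hxy
    exact mem_iUnion₂.2 ⟨n, not_le.1 fun hmn => hx (mem_iUnion₂.2 ⟨m, hmn, hxA⟩), hxA, hxB⟩
  · refine ((finite_le_nat n).biUnion fun m _ => hAB m n).subset ?_
    rintro x ⟨hxB, hxy⟩
    obtain ⟨m, hm, hA⟩ := mem_iUnion₂.1 (not_not.1 fun h => hxy (mem_iUnion.2 ⟨n, hxB, h⟩))
    exact mem_iUnion₂.2 ⟨m, hm, hA, hxB⟩

lemma exists_strictMono_forall_mem {s : ℕ → Set ℕ} (hs : ∀ k, (s k).Infinite) :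
    ∃ x : ℕ → ℕ, StrictMono x ∧ ∀ k, x k ∈ s k := by
  choose g hg using fun k => (hs k).exists_gt
  let x : ℕ → ℕ := fun k => Nat.rec (g 0 0) (fun k xk => g (k + 1) xk) k
  exact ⟨x, strictMono_nat_of_lt_succ fun k => (hg (k + 1) (x k)).2,
    fun k => by cases k <;> exact (hg _ _).1⟩

lemma exists_injective_forall_mem {ι : Type*} [Countable ι] {s : ι → Set ℕ}
    (hs : ∀ i, (s i).Infinite) : ∃ x : ι → ℕ, Injective x ∧ ∀ i, x i ∈ s i := by
  obtain ⟨f, hf⟩ := exists_injective_nat ι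
  have hs' (k : ℕ) : ((extend f s fun _ => univ) k).Infinite := by
    by_cases hk : ∃ i, f i = k
    · obtain ⟨i, rfl⟩ := hk
      simpa [hf.extend_apply] using hs i
    · simpa [extend_apply' _ _ _ hk] using infinite_univ
  obtain ⟨x, hx, hxs⟩ := exists_strictMono_forall_mem hs'
  exact ⟨x ∘ f, hx.injective.comp hf, fun i => by simpa [hf.extend_apply] using hxs (f i)⟩

lemma finite_inter_range {ρ : Type*} {A : ℕ → Set ℕ} {f : ρ → ℕ} (hf : Injective f) {x : ρ → ℕ}
    (hx : ∀ r, x r ∉ ⋃ m < f r, A m) (m : ℕ) : (A m ∩ range x).Finite := by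
  refine (((finite_le_nat m).preimage hf.injOn).image x).subset ?_
  rintro _ ⟨hA, r, rfl⟩
  exact ⟨r, not_lt.1 fun hm => hx r (mem_iUnion₂.2 ⟨m, hm, hA⟩), rfl⟩

lemma exists_disjoint_hitting {A B : ℕ → Set ℕ} {ι ι' : Type*} [Countable ι] [Countable ι']
    {c : ι → Set ℕ} {d : ι' → Set ℕ} (hc : ∀ i k, (c i \ ⋃ m < k, A m).Infinite)
    (hd : ∀ j k, (d j \ ⋃ m < k, B m).Infinite) :
    ∃ D E : Set ℕ, Disjoint D E ∧ (∀ m, (A m ∩ D).Finite) ∧ (∀ m, (B m ∩ E).Finite) ∧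
      (∀ i, (c i ∩ D).Infinite) ∧ ∀ j, (d j ∩ E).Infinite := by
  obtain ⟨f, hf⟩ := exists_injective_nat ((ι × ℕ) ⊕ (ι' × ℕ))
  -- Request `(i, j)` gets its own point of `c i`, outside `A m` for all `m < f (.inl (i, j))`.
  obtain ⟨x, hx, hxs⟩ := exists_injective_forall_mem (s := Sum.elim
    (fun p => c p.1 \ ⋃ m < f (.inl p), A m) (fun p => d p.1 \ ⋃ m < f (.inr p), B m))
    (Sum.rec (fun p => hc _ _) (fun p => hd _ _))
  refine ⟨range (x ∘ .inl), range (x ∘ .inr), ?_,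
    finite_inter_range (hf.comp Sum.inl_injective) fun p => (hxs (.inl p)).2,
    finite_inter_range (hf.comp Sum.inr_injective) fun p => (hxs (.inr p)).2,
    fun i => ?_, fun j => ?_⟩
  · rw [Set.disjoint_left]
    rintro _ ⟨p, rfl⟩ ⟨q, hq⟩
    exact Sum.inl_ne_inr (hx hq).symm
  · refine (infinite_range_of_injective fun j j' h => ?_).mono
      (range_subset_iff.2 fun j => ⟨(hxs (.inl (i, j))).1, mem_range_self (i, j)⟩)
    simpa using hx h
  · refine (infinite_range_of_injective fun j j' h => ?_).mono
      (range_subset_iff.2 fun k => ⟨(hxs (.inr (j, k))).1, mem_range_self (j, k)⟩)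
    simpa using hx h

theorem exists_interpolant {A B : ℕ → Set ℕ} {ι ι' : Type*} [Countable ι] [Countable ι']
    {c : ι → Set ℕ} {d : ι' → Set ℕ} (hAB : ∀ m n, (A m ∩ B n).Finite)
    (hc : ∀ i k, (c i \ ⋃ m < k, A m).Infinite) (hd : ∀ j k, (d j \ ⋃ m < k, B m).Infinite) :
    ∃ y : Set ℕ, (∀ m, (A m ∩ y).Finite) ∧ (∀ n, (B n \ y).Finite) ∧
      (∀ i, (c i ∩ y).Infinite) ∧ ∀ j, (d j \ y).Infinite := by
  obtain ⟨y, hyA, hyB⟩ := exists_separating_of_finite_inter hAB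
  obtain ⟨D, E, hDE, hAD, hBE, hcD, hdE⟩ := exists_disjoint_hitting hc hd
  refine ⟨(y ∪ D) \ E, fun m => ((hyA m).union (hAD m)).subset ?_,
    fun n => ((hyB n).union (hBE n)).subset ?_, fun i => (hcD i).mono ?_, fun j => (hdE j).mono ?_⟩
  · rintro x ⟨hA, (hy | hD), -⟩
    exacts [.inl ⟨hA, hy⟩, .inr ⟨hA, hD⟩]
  · rintro x ⟨hB, hx⟩
    by_cases hE : x ∈ E
    exacts [.inr ⟨hB, hE⟩, .inl ⟨hB, fun hy => hx ⟨.inl hy, hE⟩⟩]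
  · exact fun x ⟨hc, hD⟩ => ⟨hc, .inr hD, hDE.notMem_of_mem_left hD⟩
  · exact fun x ⟨hd, hE⟩ => ⟨hd, fun hy => hy.2 hE⟩

lemma exists_seq_covering_patterns {S : Set κ} (hS : S.Countable) :
    ∃ (Fs : ℕ → Finset κ) (εs : ℕ → κ → Bool), (∀ n, ↑(Fs n) ⊆ S) ∧
      ∀ (F : Finset κ) (ε : κ → Bool), ↑F ⊆ S → ∃ n, Fs n = F ∧ ∀ i ∈ F, εs n i = ε i := by
  classical
  have := hS.to_subtype
  obtain ⟨u, hu⟩ := exists_surjective_nat (Finset S × Finset S)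
  refine ⟨fun n => (u n).1.map (.subtype _), fun n i => decide (i ∈ (u n).2.map (.subtype _)),
    fun n => by simp, fun F ε hF => ?_⟩
  obtain ⟨n, hn⟩ := hu (F.subtype (· ∈ S), (F.filter (ε · = true)).subtype (· ∈ S))
  refine ⟨n, ?_, fun i hi => ?_⟩
  · simp only [hn, Finset.subtype_map]
    exact Finset.filter_true_of_mem fun i hi => hF hi
  · simp [hn, Finset.subtype_map, hi, hF hi]

section Faithful

variable {C : κ → Bool → Set X} {e : κ → Set ℕ} {S : Set κ}

lemma cell_literal_congr {e' : κ → Set ℕ} {F : Finset κ} {ε : κ → Bool} (he : EqOn e e' F) :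
    cell (literal e) F ε = cell (literal e') F ε :=
  iInter₂_congr fun i hi => by rw [literal, literal, he hi]

lemma FaithfulOn.congr {e' : κ → Set ℕ} (h : FaithfulOn C e S) (he : EqOn e e' S) :
    FaithfulOn C e' S := fun F ε hF => by
  rw [← cell_literal_congr (he.mono hF)]
  exact h F ε hF

lemma FaithfulOn.finite_inter (h : FaithfulOn C e S) {F G : Finset κ} {ε δ : κ → Bool}
    (hF : ↑F ⊆ S) (hG : ↑G ⊆ S) (hFG : cell C F ε ∩ cell C G δ = ∅) :
    (cell (literal e) F ε ∩ cell (literal e) G δ).Finite := by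
  classical
  by_cases hc : ∀ i ∈ F, i ∈ G → ε i = δ i
  · rw [cell_inter_cell hc] at hFG ⊢
    exact (h _ _ (by simpa using And.intro hF hG)).1 hFG
  · obtain ⟨i, hiF, hiG, hne⟩ : ∃ i ∈ F, i ∈ G ∧ ε i ≠ δ i := by simpa using hc
    simp [(disjoint_cell_literal hiF hiG hne).inter_eq]

/-- Refine the cell to the pattern of `z` on all indices involved: the refined cell contains `z`,
so it is infinite, and it is disjoint from every cell that misses `z`. -/
lemma FaithfulOn.infinite_diff_iUnion (h : FaithfulOn C e S)
    (hcov : ∀ i, C i true ∪ C i false = univ) {F : Finset κ} {ε : κ → Bool} (hF : ↑F ⊆ S)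
    {z : X} (hz : z ∈ cell C F ε) {ι : Type*}
    (G : Finset ι) (Fs : ι → Finset κ) (εs : ι → κ → Bool) (hGS : ∀ m ∈ G, ↑(Fs m) ⊆ S)
    (hzG : ∀ m ∈ G, z ∉ cell C (Fs m) (εs m)) :
    (cell (literal e) F ε \ ⋃ m ∈ G, cell (literal e) (Fs m) (εs m)).Infinite := by
  classical
  obtain ⟨δ, hδF, hzδ⟩ := exists_pattern_of_mem_cell hcov hz
  set H := F ∪ G.biUnion Fs
  have hHS : ↑H ⊆ S := by
    intro i hi
    simp only [H, Finset.coe_union, Finset.coe_biUnion, mem_union, mem_iUnion₂] at hi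
    obtain hi | ⟨m, hm, hi⟩ := hi
    exacts [hF hi, hGS m hm hi]
  have hinf : (cell (literal e) H δ).Infinite := fun hfin =>
    ((h H δ hHS).2 hfin).subset (mem_cell.2 fun i _ => hzδ i)
  refine hinf.mono (subset_sdiff.2 ⟨?_, disjoint_iUnion₂_right.2 fun m hm => ?_⟩)
  · rw [← cell_congr hδF]
    exact cell_subset_cell Finset.subset_union_left
  · obtain ⟨i, hi, hzi⟩ : ∃ i ∈ Fs m, z ∉ C i (εs m i) := by
      simpa [mem_cell] using hzG m hm
    exact disjoint_cell_literal (Finset.mem_union_right _ (Finset.mem_biUnion.2 ⟨m, hm, hi⟩)) hi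
      fun hne => hzi (hne ▸ hzδ i)

theorem FaithfulOn.exists_split (h : FaithfulOn C e S) (hS : S.Countable)
    (hcov : ∀ i, C i true ∪ C i false = univ) {P M : Set X} (hPM : P ∪ M = univ) :
    ∃ y : Set ℕ, ∀ (F : Finset κ) (ε : κ → Bool), ↑F ⊆ S →
      (cell C F ε ∩ P = ∅ ↔ (cell (literal e) F ε ∩ y).Finite) ∧
      (cell C F ε ∩ M = ∅ ↔ (cell (literal e) F ε \ y).Finite) := by
  classical
  obtain ⟨Fs, εs, hFsS, hsurj⟩ := exists_seq_covering_patterns hS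
  let R n := cell C (Fs n) (εs n)
  let a n := cell (literal e) (Fs n) (εs n)
  let avoid (Q : Set X) (m : ℕ) : Set ℕ := if R m ∩ Q = ∅ then a m else ∅
  have hinf (Q : Set X) (n : {n // (R n ∩ Q).Nonempty}) (k : ℕ) :
      (a n \ ⋃ m < k, avoid Q m).Infinite := by
    obtain ⟨n, z, hzR, hzQ⟩ := n
    refine (h.infinite_diff_iUnion hcov (hFsS n) hzR ((Finset.range k).filter (R · ∩ Q = ∅))
      Fs εs (fun m _ => hFsS m) fun m hm hzm => ?_).mono (sdiff_subset_sdiff_right ?_)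
    · exact (Finset.mem_filter.1 hm).2.subset ⟨hzm, hzQ⟩
    · refine iUnion₂_subset fun m hm => ?_
      by_cases hRQ : R m ∩ Q = ∅
      · simp only [avoid, if_pos hRQ]
        exact subset_biUnion_of_mem (u := a) (by simpa using ⟨hm, hRQ⟩)
      · simp [avoid, hRQ]
  have hAB (m n : ℕ) : (avoid P m ∩ avoid M n).Finite := by
    by_cases hP : R m ∩ P = ∅
    · by_cases hM : R n ∩ M = ∅
      · simp only [avoid, if_pos hP, if_pos hM]
        refine h.finite_inter (hFsS m) (hFsS n) (eq_empty_of_forall_notMem fun z hz => ?_)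
        rcases (hPM.symm ▸ mem_univ z : z ∈ P ∪ M) with hzP | hzM
        exacts [hP.subset ⟨hz.1, hzP⟩, hM.subset ⟨hz.2, hzM⟩]
      · simp [avoid, hM]
    · simp [avoid, hP]
  obtain ⟨y, hyP, hyM, hyP', hyM'⟩ := exists_interpolant hAB (hinf P) (hinf M)
  refine ⟨y, fun F ε hF => ?_⟩
  obtain ⟨n, rfl, hεs⟩ := hsurj F ε hF
  rw [← cell_congr hεs, ← cell_congr hεs]
  refine ⟨⟨fun hP => ?_, fun hfin => ?_⟩, ⟨fun hM => ?_, fun hfin => ?_⟩⟩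
  · simpa [avoid, R, hP] using hyP n
  · exact not_nonempty_iff_eq_empty.1 fun hne => hyP' ⟨n, hne⟩ hfin
  · simpa [avoid, R, hM] using hyM n
  · exact not_nonempty_iff_eq_empty.1 fun hne => hyM' ⟨n, hne⟩ hfin

lemma FaithfulOn.insert_of_split {x : κ} (h : FaithfulOn C e S)
    (hx : ∀ (F : Finset κ) (ε : κ → Bool), ↑F ⊆ S →
      (cell C F ε ∩ C x true = ∅ ↔ (cell (literal e) F ε ∩ e x).Finite) ∧
      (cell C F ε ∩ C x false = ∅ ↔ (cell (literal e) F ε \ e x).Finite)) :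
    FaithfulOn C e (insert x S) := by
  classical
  intro F ε hF
  by_cases hxF : x ∈ F
  · have hF' : ↑(F.erase x) ⊆ S := fun i hi => by
      simpa [(Finset.mem_erase.1 hi).1] using hF (Finset.mem_of_mem_erase hi)
    rw [← Finset.insert_erase hxF, cell_insert, cell_insert, inter_comm, inter_comm (literal e x _)]
    cases hε : ε x
    exacts [(hx _ ε hF').2, (hx _ ε hF').1]
  · exact h F ε fun i hi => (hF hi).resolve_left fun hix => hxF (hix ▸ hi)

lemma FaithfulOn.exists_update_insert [DecidableEq κ] (h : FaithfulOn C e S) (hS : S.Countable)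
    (hcov : ∀ i, C i true ∪ C i false = univ) {x : κ} (hx : x ∉ S) :
    ∃ y : Set ℕ, FaithfulOn C (update e x y) (insert x S) := by
  obtain ⟨y, hy⟩ := h.exists_split hS hcov (hcov x)
  have heq : EqOn e (update e x y) S := fun i hi =>
    (update_of_ne (ne_of_mem_of_not_mem hi hx) _ _).symm
  refine ⟨y, (h.congr heq).insert_of_split fun F ε hF => ?_⟩
  rw [← cell_literal_congr (heq.mono hF), update_self]
  exact hy F ε hF

end Faithful

section Recursion

variable (C : κ → Bool → Set X)

lemma FaithfulOn.of_forall_Iic [Nonempty X] [LinearOrder κ] {e : κ → Set ℕ} {S : Set κ}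
    (h : ∀ x ∈ S, FaithfulOn C e (Iic x)) : FaithfulOn C e S := by
  intro F ε hF
  rcases F.eq_empty_or_nonempty with rfl | hne
  · simp [infinite_univ]
  · exact h _ (hF (F.max'_mem hne)) F ε fun i hi => F.le_max' i hi

noncomputable def faithfulRec [LinearOrder κ] [WellFoundedLT κ] : κ → Set ℕ :=
  WellFoundedLT.fix fun x ih => Classical.epsilon fun y =>
    FaithfulOn C (fun z => if hz : z < x then ih z hz else y) (Iic x)

theorem faithfulOn_faithfulRec [Nonempty X] [LinearOrder κ] [WellFoundedLT κ]
    (hcount : ∀ x : κ, (Iio x).Countable) (hcov : ∀ i, C i true ∪ C i false = univ) :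
    FaithfulOn C (faithfulRec C) univ := by
  set E := faithfulRec C
  suffices ∀ x, FaithfulOn C E (Iic x) from .of_forall_Iic C fun x _ => this x
  intro x
  induction x using WellFoundedLT.induction with
  | _ x ih =>
  let glue (y : Set ℕ) (z : κ) : Set ℕ := if z < x then E z else y
  have hE : E x = Classical.epsilon fun y => FaithfulOn C (glue y) (Iic x) :=
    WellFoundedLT.fix_eq _ x
  have agree (y : Set ℕ) : EqOn (update E x y) (glue y) (Iic x) := fun z hz => by
    rcases (mem_Iic.1 hz).lt_or_eq with hzx | rfl
    · simp [glue, hzx, hzx.ne]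
    · simp [glue]
  obtain ⟨y, hy⟩ := (FaithfulOn.of_forall_Iic C (S := Iio x) ih).exists_update_insert
    (hcount x) hcov self_notMem_Iio
  rw [Iio_insert] at hy
  have hx := Classical.epsilon_spec (p := fun y => FaithfulOn C (glue y) (Iic x))
    ⟨y, hy.congr (agree y)⟩
  rw [← hE] at hx
  exact hx.congr fun z hz => by simpa using (agree (E x) hz).symm

theorem exists_faithfulOn_univ [Nonempty X] (hκ : #κ ≤ ℵ₁)
    (hcov : ∀ i, C i true ∪ C i false = univ) :
    ∃ e : κ → Set ℕ, FaithfulOn C e univ := by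
  obtain ⟨_, _, hκ_ord⟩ := Cardinal.exists_ord_eq_type_lt κ
  have hcount (x : κ) : (Iio x).Countable := Cardinal.le_aleph0_iff_set_countable.1
    (Cardinal.lt_aleph_one_iff.1 ((Cardinal.mk_Iio_lt x hκ_ord).trans_le hκ))
  exact ⟨faithfulRec C, faithfulOn_faithfulRec C hcount hcov⟩

end Recursion

lemma exists_omegaStar_forall_mem {ι : Type*} [Nonempty ι] {s : ι → Set ℕ}
    (hs : Directed (· ⊇ ·) s) (hinf : ∀ i, (s i).Infinite) : ∃ p : OmegaStar, ∀ i, s i ∈ p.1 := by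
  have : (⨅ i, cofinite ⊓ 𝓟 (s i)).NeBot :=
    iInf_neBot_of_directed' (fun i j => let ⟨k, hki, hkj⟩ := hs i j
      ⟨k, inf_le_inf_left _ (principal_mono.2 hki), inf_le_inf_left _ (principal_mono.2 hkj)⟩)
      fun i => (hinf i).cofinite_inf_principal_neBot
  obtain ⟨u, hu⟩ := Ultrafilter.exists_le (⨅ i, cofinite ⊓ 𝓟 (s i))
  have hle i : ↑u ≤ cofinite ⊓ 𝓟 (s i) := hu.trans (iInf_le _ i)
  refine ⟨⟨u, fun n hn => ?_⟩, fun i => le_principal_iff.1 ((hle i).trans inf_le_right)⟩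
  have : ({n}ᶜ : Set ℕ) ∈ u := (hle (Classical.arbitrary ι)).trans inf_le_left
    (finite_singleton n).compl_mem_cofinite
  simp [hn] at this

lemma infinite_of_mem_omegaStar (p : OmegaStar) {s : Set ℕ} (hs : s ∈ p.1) : s.Infinite :=
  fun hfin => let ⟨n, _, hn⟩ := Ultrafilter.eq_pure_of_finite_mem hfin hs; p.2 n hn

section Pattern

variable {e : κ → Set ℕ}

open scoped Classical in
noncomputable def ultrafilterPattern (e : κ → Set ℕ) (p : Ultrafilter ℕ) (i : κ) : Bool :=
  decide (e i ∈ p)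

lemma cell_literal_ultrafilterPattern_mem (p : Ultrafilter ℕ) (F : Finset κ) :
    cell (literal e) F (ultrafilterPattern e p) ∈ p := by
  refine (biInter_finset_mem F).2 fun i _ => ?_
  by_cases hi : e i ∈ p
  · simp [literal, ultrafilterPattern, hi]
  · simpa [literal, ultrafilterPattern, hi] using Ultrafilter.compl_mem_iff_notMem.2 hi

lemma ultrafilterPattern_eq_of_cell_mem {p : Ultrafilter ℕ} {F : Finset κ} {ε : κ → Bool}
    (h : cell (literal e) F ε ∈ p) {i : κ} (hi : i ∈ F) : ultrafilterPattern e p i = ε i := by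
  have := p.1.mem_of_superset h (cell_subset_of_mem hi)
  cases hε : ε i
  · simpa [literal, ultrafilterPattern, hε, Ultrafilter.compl_mem_iff_notMem] using this
  · simpa [literal, ultrafilterPattern, hε] using this

end Pattern

section Topology

variable {Y : Type*} [TopologicalSpace Y] {B : Set (Set Y)}

/-- Closures make every cell closed, so compactness applies; regularity still lets
the pieces `closure U` and `Uᶜ` separate points. -/
def basicCover (B : Set (Set Y)) (U : B) (b : Bool) : Set Y := cond b (closure U) (U : Set Y)ᶜ

open scoped Classical in
lemma mem_basicCover_decide (y : Y) (U : B) : y ∈ basicCover B U (decide (y ∈ (U : Set Y))) := by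
  by_cases hy : y ∈ (U : Set Y)
  · simpa [basicCover, hy] using subset_closure hy
  · simp [basicCover, hy]

lemma basicCover_cover (U : B) : basicCover B U true ∪ basicCover B U false = univ :=
  eq_univ_of_forall fun y => by
    classical
    cases h : decide (y ∈ (U : Set Y))
    exacts [.inr (h ▸ mem_basicCover_decide y U), .inl (h ▸ mem_basicCover_decide y U)]

lemma isClosed_basicCover (hB : IsTopologicalBasis B) (U : B) (b : Bool) :
    IsClosed (basicCover B U b) := by
  cases b
  exacts [(hB.isOpen U.2).isClosed_compl, isClosed_closure]

lemma subsingleton_iInter_cell [T3Space Y] (hB : IsTopologicalBasis B) (ε : B → Bool) :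
    (⋂ F, cell (basicCover B) F ε).Subsingleton := by
  intro z hz z' hz'
  by_contra hne
  obtain ⟨U, hUB, hzU, hUz'⟩ :=
    hB.exists_closure_subset (isOpen_compl_singleton.mem_nhds (mem_compl_singleton_iff.2 hne))
  have hmem {w} (hw : w ∈ ⋂ F, cell (basicCover B) F ε) :
      w ∈ basicCover B ⟨U, hUB⟩ (ε ⟨U, hUB⟩) := by
    simpa [cell] using mem_iInter.1 hw {⟨U, hUB⟩}
  cases h : ε ⟨U, hUB⟩
  · have hz := hmem hz
    rw [h] at hz
    exact hz hzU
  · have hz' := hmem hz'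
    rw [h] at hz'
    exact hUz' hz' rfl

variable [CompactSpace Y] (hB : IsTopologicalBasis B) {e : B → Set ℕ}
  (he : FaithfulOn (basicCover B) e univ)

include hB he in
lemma nonempty_iInter_cell (p : OmegaStar) :
    (⋂ F, cell (basicCover B) F (ultrafilterPattern e p.1)).Nonempty :=
  IsCompact.nonempty_iInter_of_directed_nonempty_isCompact_isClosed _ directed_cell
    (fun F => nonempty_iff_ne_empty.2 fun h => infinite_of_mem_omegaStar p
      (cell_literal_ultrafilterPattern_mem p.1 F) ((he F _ (subset_univ _)).1 h))
    (fun _ => (isClosed_cell (isClosed_basicCover hB)).isCompact)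
    fun _ => isClosed_cell (isClosed_basicCover hB)

noncomputable def omegaStarMap (p : OmegaStar) : Y := (nonempty_iInter_cell hB he p).some

include hB he in
lemma omegaStarMap_eq [T2Space Y] {p : OmegaStar} {y : Y}
    (hy : y ∈ ⋂ F, cell (basicCover B) F (ultrafilterPattern e p.1)) : omegaStarMap hB he p = y :=
  subsingleton_iInter_cell hB _ (nonempty_iInter_cell hB he p).some_mem hy

include hB he in
lemma continuous_omegaStarMap [T2Space Y] : Continuous (omegaStarMap hB he) := by
  refine continuous_iff_continuousAt.2 fun p W hW => ?_
  obtain ⟨F, hF⟩ := exists_subset_nhds_of_compactSpace directed_cell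
    (fun _ => isClosed_cell (isClosed_basicCover hB))
    fun y hy => omegaStarMap_eq hB he hy ▸ hW
  have hopen : IsOpen {q : OmegaStar | cell (literal e) F (ultrafilterPattern e p.1) ∈ q.1} :=
    (ultrafilter_isOpen_basic _).preimage continuous_subtype_val
  refine mem_map.2 <| mem_of_superset (hopen.mem_nhds (cell_literal_ultrafilterPattern_mem p.1 F))
    fun q hq => hF ?_
  rw [cell_congr fun i hi => (ultrafilterPattern_eq_of_cell_mem hq hi).symm]
  exact mem_iInter.1 (nonempty_iInter_cell hB he q).some_mem F

include hB he in
lemma surjective_omegaStarMap [T2Space Y] : Surjective (omegaStarMap hB he) := by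
  classical
  intro y
  let ε (U : B) : Bool := decide (y ∈ (U : Set Y))
  have hy (F : Finset B) : y ∈ cell (basicCover B) F ε :=
    mem_cell.2 fun U _ => mem_basicCover_decide y U
  obtain ⟨p, hp⟩ := exists_omegaStar_forall_mem directed_cell
    fun F => mt (he F ε (subset_univ _)).2 (nonempty_iff_ne_empty.1 ⟨y, hy F⟩)
  have hpat : ultrafilterPattern e p.1 = ε :=
    funext fun U => ultrafilterPattern_eq_of_cell_mem (hp {U}) (Finset.mem_singleton_self U)
  exact ⟨p, omegaStarMap_eq hB he (hpat ▸ mem_iInter.2 hy)⟩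

end Topology

end Parovicenko

/-- Parovičenko's theorem: every nonempty compact Hausdorff space of weight at
most `ℵ₁` is a continuous image of `ω*`. -/
theorem parovicenko
    {Y : Type u} [TopologicalSpace Y] [CompactSpace Y] [T2Space Y] [Nonempty Y]
    (hw : tweight Y ≤ Cardinal.aleph 1) :
    ∃ g : OmegaStar → Y, Continuous g ∧ Function.Surjective g := by
  have : Nonempty {B : Set (Set Y) // IsTopologicalBasis B} := ⟨⟨_, isTopologicalBasis_opens⟩⟩
  obtain ⟨⟨B, hB⟩, hBw⟩ := ciInf_mem fun B : {B : Set (Set Y) // IsTopologicalBasis B} => #B.1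
  obtain ⟨e, he⟩ := Parovicenko.exists_faithfulOn_univ (Parovicenko.basicCover B)
    (hBw.trans_le hw) Parovicenko.basicCover_cover
  exact ⟨_, Parovicenko.continuous_omegaStarMap hB he, Parovicenko.surjective_omegaStarMap hB he⟩
end

section
/- Let X be a compact Hausdorff space such that (X, id_X) is a quotient of (ω*,σ), where id_X is the identity map on X. Then there exists a continuous surjection from ℍ* onto X. -/
open Topology Set

/-- The half line `ℍ = [0, ∞)`. -/
abbrev HalfLine : Type := Set.Ici (0 : ℝ)

/-- `ℍ* = βℍ ∖ ℍ`, the Stone–Čech remainder of the half line. -/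
abbrev HStar : Type :=
  {y : StoneCech HalfLine // y ∉ Set.range (stoneCechUnit : HalfLine → StoneCech HalfLine)}

/-! The Tychonoff cube `I ^ C(X, I)` contains a copy of `X`, and its coordinates can be
interpolated linearly. By Tietze, `ω* → X → I ^ C(X, I)` extends over `βℕ`, which yields a
sequence `A` in the cube converging to (the image of) `Q p` along every free ultrafilter `p`.
Since `Q ∘ σ = Q`, the points `A n` and `A (n + 1)` have the same limit along `p`, so the path
through `A` made of straight segments converges to `Q p` along every ultrafilter `V` on `ℍ`
with `⌊V⌋ = p`. Hence the cluster set of that path at infinity is exactly the copy of `X`,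
and the Stone–Čech extension of the path maps `ℍ*` onto this cluster set. -/

open Filter unitInterval

theorem mapClusterPt_cocompact_stoneCechUnit_iff {α : Type*} [TopologicalSpace α]
    [CompletelyRegularSpace α] [WeaklyLocallyCompactSpace α] {y : StoneCech α} :
    MapClusterPt y (cocompact α) stoneCechUnit ↔ y ∉ range stoneCechUnit := by
  constructor
  · rintro hy ⟨t, rfl⟩
    rw [isInducing_stoneCechUnit.mapClusterPt_iff, clusterPt_iff_not_disjoint,
      disjoint_cocompact_right] at hy
    obtain ⟨K, hK, hKt⟩ := exists_compact_mem_nhds t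
    exact hy ⟨K, hKt, hK⟩
  · intro hy
    rw [MapClusterPt, clusterPt_iff_forall_mem_closure]
    intro s hs
    obtain ⟨K, hK, hKs⟩ := mem_cocompact.mp (mem_map.mp hs)
    have hcover : closure (stoneCechUnit '' Kᶜ) ∪ stoneCechUnit '' K = univ := by
      rw [← (hK.image continuous_stoneCechUnit).isClosed.closure_eq, ← closure_union,
        ← image_union, compl_union_self, image_univ, denseRange_stoneCechUnit.closure_range]
    have hyK : y ∉ stoneCechUnit '' K := fun h => hy (image_subset_range _ _ h)
    exact closure_mono (image_subset_iff.mpr hKs) ((hcover ▸ mem_univ y).resolve_right hyK)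

theorem image_setOf_mapClusterPt {α K₁ K₂ : Type*} [TopologicalSpace K₁] [TopologicalSpace K₂]
    [CompactSpace K₁] [T2Space K₂] {G : K₁ → K₂} (hG : Continuous G) (u : α → K₁)
    (l : Filter α) :
    G '' {y | MapClusterPt y l u} = {c | MapClusterPt c l (G ∘ u)} := by
  ext c
  constructor
  · rintro ⟨y, hy, rfl⟩
    exact hy.continuousAt_comp hG.continuousAt
  · intro hc
    obtain ⟨V, hVl, hV⟩ := mapClusterPt_iff_ultrafilter.mp hc
    obtain ⟨y, -, hy⟩ := isCompact_univ.ultrafilter_le_nhds (V.map u) (by simp)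
    refine ⟨y, mapClusterPt_iff_ultrafilter.mpr ⟨V, hVl, hy⟩, ?_⟩
    exact tendsto_nhds_unique ((hG.tendsto y).comp hy) hV

theorem stoneCechExtend_image_compl_range {α K : Type*} [TopologicalSpace α]
    [CompletelyRegularSpace α] [WeaklyLocallyCompactSpace α] [TopologicalSpace K]
    [CompactSpace K] [T2Space K] {φ : α → K} (hφ : Continuous φ) :
    stoneCechExtend hφ '' (range stoneCechUnit)ᶜ = {c | MapClusterPt c (cocompact α) φ} := by
  have h := image_setOf_mapClusterPt (continuous_stoneCechExtend hφ) stoneCechUnit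
    (cocompact α)
  simp_rw [mapClusterPt_cocompact_stoneCechUnit_iff, stoneCechExtend_extends] at h
  exact h

theorem Topology.IsEmbedding.exists_continuous_surjective_of_range_eq {X Y K : Type*}
    [TopologicalSpace X] [TopologicalSpace Y] [TopologicalSpace K] {e : X → K}
    (he : IsEmbedding e) {F : Y → K} (hF : Continuous F) (h : range F = range e) :
    ∃ g : Y → X, Continuous g ∧ Function.Surjective g := by
  have hFe (y : Y) : F y ∈ range e := h ▸ mem_range_self y
  refine ⟨he.toHomeomorph.symm ∘ codRestrict F _ hFe,
    he.toHomeomorph.symm.continuous.comp (hF.codRestrict hFe),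
    he.toHomeomorph.symm.surjective.comp ?_⟩
  rintro ⟨k, hk⟩
  obtain ⟨y, rfl⟩ := h.symm ▸ hk
  exact ⟨y, rfl⟩

theorem isEmbedding_evalUnitInterval (X : Type*) [TopologicalSpace X] [CompactSpace X]
    [T2Space X] : IsEmbedding (fun x (f : C(X, I)) => f x) := by
  refine (Continuous.isClosedEmbedding (continuous_pi fun f => f.continuous) ?_).isEmbedding
  intro x y hxy
  by_contra hne
  obtain ⟨f, hf, hfxy⟩ := separatesPoints_continuous_of_t35Space_Icc hne
  exact hfxy (congrFun hxy ⟨f, hf⟩)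

section PiecewiseLinear

variable {E : Type*} [AddCommGroup E] [Module ℝ E]

noncomputable def piecewiseLinear (a : ℤ → E) (t : ℝ) : E :=
  AffineMap.lineMap (a ⌊t⌋) (a (⌊t⌋ + 1)) (Int.fract t)

theorem piecewiseLinear_eqOn_Icc (a : ℤ → E) (m : ℤ) :
    EqOn (piecewiseLinear a) (fun t => AffineMap.lineMap (a m) (a (m + 1)) (t - m))
      (Icc (m : ℝ) (m + 1)) := by
  rintro t ⟨hmt, htm⟩
  rcases htm.lt_or_eq with htm | rfl
  · have hfloor : ⌊t⌋ = m := Int.floor_eq_iff.mpr ⟨hmt, htm⟩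
    simp [piecewiseLinear, Int.fract, hfloor]
  · have hfloor : ⌊(m : ℝ) + 1⌋ = m + 1 := by exact_mod_cast Int.floor_intCast (m + 1)
    simp [piecewiseLinear, hfloor]

variable [TopologicalSpace E] [IsTopologicalAddGroup E] [ContinuousSMul ℝ E]

theorem continuous_piecewiseLinear (a : ℤ → E) : Continuous (piecewiseLinear a) := by
  have hIcc (m : ℤ) : ContinuousOn (piecewiseLinear a) (Icc (m : ℝ) (m + 1)) :=
    (AffineMap.lineMap_continuous.comp (continuous_sub_right _)).continuousOn.congr
      (piecewiseLinear_eqOn_Icc a m)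
  refine continuous_iff_continuousAt.mpr fun x => ?_
  have hunion : Icc ((⌊x⌋ - 1 : ℤ) : ℝ) (⌊x⌋ + 1) =
      Icc ((⌊x⌋ - 1 : ℤ) : ℝ) ((⌊x⌋ - 1 : ℤ) + 1) ∪ Icc (⌊x⌋ : ℝ) (⌊x⌋ + 1) := by
    rw [Int.cast_sub, Int.cast_one, sub_add_cancel, Icc_union_Icc_eq_Icc] <;> linarith
  have hon := (hIcc (⌊x⌋ - 1)).union_of_isClosed (hIcc ⌊x⌋) isClosed_Icc isClosed_Icc
  rw [← hunion] at hon
  refine hon.continuousAt (Icc_mem_nhds ?_ (Int.lt_floor_add_one x))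
  push_cast
  linarith [Int.floor_le x]

-- No smallness of `a (n + 1) - a n` is needed: along an ultrafilter the fractional part
-- converges in `[0, 1]`.
theorem tendsto_piecewiseLinear {a : ℤ → E} {V : Ultrafilter ℝ} {c : E}
    (h₀ : Tendsto (fun t => a ⌊t⌋) (V : Filter ℝ) (𝓝 c))
    (h₁ : Tendsto (fun t => a (⌊t⌋ + 1)) (V : Filter ℝ) (𝓝 c)) :
    Tendsto (piecewiseLinear a) (V : Filter ℝ) (𝓝 c) := by
  obtain ⟨s, -, hs⟩ := (isCompact_Icc (a := (0 : ℝ)) (b := 1)).ultrafilter_le_nhds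
    (V.map Int.fract) (le_principal_iff.mpr (Ultrafilter.mem_map.mpr (univ_mem' fun t =>
      ⟨Int.fract_nonneg t, (Int.fract_lt_one t).le⟩)))
  have h := h₀.lineMap h₁ hs
  rw [AffineMap.lineMap_same_apply] at h
  exact h

end PiecewiseLinear

theorem Ultrafilter.coe_le_atTop_iff_forall_ne_pure {p : Ultrafilter ℕ} :
    (p : Filter ℕ) ≤ atTop ↔ ∀ n, p ≠ pure n := by
  rw [← Nat.cofinite_eq_atTop]
  refine ⟨fun hp n hpn => ?_, fun hp => p.le_cofinite_or_eq_pure.resolve_right ?_⟩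
  · have h := hp (finite_singleton n).compl_mem_cofinite
    rw [hpn] at h
    exact h rfl
  · rintro ⟨n, hn⟩
    exact hp n hn

theorem Ultrafilter.isClosed_setOf_coe_le {α : Type*} (f : Filter α) :
    IsClosed {p : Ultrafilter α | ↑p ≤ f} := by
  have h : {p : Ultrafilter α | ↑p ≤ f} = ⋂ s ∈ f, {p | s ∈ p} := by
    ext p
    simp [Filter.le_def]
  rw [h]
  exact isClosed_biInter fun s _ => ultrafilter_isClosed_basic s

theorem OmegaStar.exists_seq_tendsto {Y : Type*} [TopologicalSpace Y] [TietzeExtension.{0} Y]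
    {F : OmegaStar → Y} (hF : Continuous F) :
    ∃ a : ℕ → Y, ∀ p : OmegaStar, Tendsto a p.1 (𝓝 (F p)) := by
  have hclosed : IsClosed {p : Ultrafilter ℕ | ∀ n, p ≠ pure n} := by
    simpa only [Ultrafilter.coe_le_atTop_iff_forall_ne_pure] using
      Ultrafilter.isClosed_setOf_coe_le (atTop : Filter ℕ)
  obtain ⟨G, hG⟩ := ContinuousMap.exists_restrict_eq hclosed ⟨F, hF⟩
  refine ⟨fun n => G (pure n), fun p => ?_⟩
  have h := (G.continuous.tendsto p.1).comp p.1.tendsto_pure_self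
  rwa [show G p.1 = F p from DFunLike.congr_fun hG p] at h

instance : CompactIccSpace HalfLine :=
  ⟨fun {a b} => (IsClosedEmbedding.subtypeVal isClosed_Ici).isCompact_preimage
    (isCompact_Icc (a := (a : ℝ)) (b := b))⟩

instance : WeaklyLocallyCompactSpace HalfLine := isClosed_Ici.weaklyLocallyCompactSpace

theorem HalfLine.cocompact_eq_atTop : cocompact HalfLine = atTop := _root_.cocompact_eq_atTop

theorem HalfLine.tendsto_natFloor_atTop :
    Tendsto (fun t : HalfLine => ⌊(t : ℝ)⌋₊) atTop atTop :=
  tendsto_comp_val_Ici_atTop.mpr tendsto_nat_floor_atTop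

theorem HalfLine.tendsto_natCast_atTop :
    Tendsto (fun n : ℕ => (⟨n, mem_Ici.mpr n.cast_nonneg⟩ : HalfLine)) atTop atTop :=
  tendsto_Ici_atTop.mpr tendsto_natCast_atTop_atTop

-- Interpolating between points of `I` never leaves `I`: `projIcc` only spares us saying so.
noncomputable def cubePath {ι : Type*} (A : ℕ → ι → I) (t : HalfLine) : ι → I :=
  fun i => projIcc 0 1 zero_le_one (piecewiseLinear (fun k => (A k.toNat i : ℝ)) t)

theorem continuous_cubePath {ι : Type*} (A : ℕ → ι → I) : Continuous (cubePath A) :=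
  continuous_pi fun _ =>
    continuous_projIcc.comp ((continuous_piecewiseLinear _).comp continuous_subtype_val)

theorem tendsto_cubePath {ι : Type*} {A : ℕ → ι → I} {V : Ultrafilter HalfLine} {c : ι → I}
    (h₀ : Tendsto (fun t : HalfLine => A ⌊(t : ℝ)⌋₊) V (𝓝 c))
    (h₁ : Tendsto (fun t : HalfLine => A (⌊(t : ℝ)⌋₊ + 1)) V (𝓝 c)) :
    Tendsto (cubePath A) V (𝓝 c) := by
  refine tendsto_pi_nhds.mpr fun i => ?_
  have hcoord {f : HalfLine → ι → I} (hf : Tendsto f V (𝓝 c)) :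
      Tendsto (fun t => (f t i : ℝ)) V (𝓝 (c i : ℝ)) :=
    continuous_subtype_val.continuousAt.tendsto.comp (tendsto_pi_nhds.mp hf i)
  have hpl : Tendsto (piecewiseLinear (fun k => (A k.toNat i : ℝ))) (V.map Subtype.val)
      (𝓝 (c i : ℝ)) := by
    refine tendsto_piecewiseLinear ?_ ?_
    · rw [Ultrafilter.coe_map, tendsto_map'_iff]
      simpa only [Function.comp_def, Int.floor_toNat] using hcoord h₀
    · rw [Ultrafilter.coe_map, tendsto_map'_iff]
      refine (hcoord h₁).congr fun t => ?_
      have hfloor : (⌊(t : ℝ)⌋ + 1).toNat = ⌊(t : ℝ)⌋₊ + 1 := by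
        have := Int.floor_nonneg.mpr (mem_Ici.mp t.2)
        rw [← Int.floor_toNat]
        omega
      simp only [Function.comp_apply, hfloor]
  rw [Ultrafilter.coe_map, tendsto_map'_iff] at hpl
  have h := (continuous_projIcc (h := zero_le_one (α := ℝ)).tendsto _).comp hpl
  rwa [projIcc_val] at h

theorem exists_setOf_mapClusterPt_cubePath_eq_range {ι : Type*} {Q : OmegaStar → ι → I}
    (hQ : Continuous Q) (hσ : ∀ p, Q (shiftMap p) = Q p) :
    ∃ A : ℕ → ι → I, {c | MapClusterPt c (cocompact HalfLine) (cubePath A)} = range Q := by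
  obtain ⟨A, hA⟩ := OmegaStar.exists_seq_tendsto hQ
  have hlim (p : OmegaStar) (V : Ultrafilter HalfLine)
      (hV : V.map (fun t : HalfLine => ⌊(t : ℝ)⌋₊) = p.1) : Tendsto (cubePath A) V (𝓝 (Q p)) := by
    have hfloor : Tendsto (fun t : HalfLine => ⌊(t : ℝ)⌋₊) V p.1 := by
      rw [← hV, Ultrafilter.coe_map]
      exact tendsto_map
    have hshift := hA (shiftMap p)
    rw [hσ, shiftMap, Ultrafilter.coe_map, tendsto_map'_iff] at hshift
    exact tendsto_cubePath ((hA p).comp hfloor) (hshift.comp hfloor)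
  refine ⟨A, ?_⟩
  ext c
  rw [HalfLine.cocompact_eq_atTop, mem_ofPred_eq, mapClusterPt_iff_ultrafilter]
  constructor
  · rintro ⟨V, hV, hVc⟩
    have hfree : ∀ n, V.map (fun t : HalfLine => ⌊(t : ℝ)⌋₊) ≠ pure n := by
      rw [← Ultrafilter.coe_le_atTop_iff_forall_ne_pure, Ultrafilter.coe_map]
      exact HalfLine.tendsto_natFloor_atTop.mono_left hV
    exact ⟨⟨_, hfree⟩, tendsto_nhds_unique (hlim _ V rfl) hVc⟩
  · rintro ⟨p, rfl⟩
    refine ⟨p.1.map fun n : ℕ => (⟨n, mem_Ici.mpr n.cast_nonneg⟩ : HalfLine), ?_, hlim p _ ?_⟩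
    · exact HalfLine.tendsto_natCast_atTop.mono_left
        (Ultrafilter.coe_le_atTop_iff_forall_ne_pure.mpr p.2)
    · rw [Ultrafilter.map_map]
      convert Ultrafilter.map_id p.1
      funext n
      exact Nat.floor_natCast n

/-- If `(X, id)` is a quotient of `(ω*, σ)`, then `X` is a continuous image of `ℍ*`. -/
theorem continuous_image_of_HStar_of_id_quotient
    {X : Type u} [TopologicalSpace X] [CompactSpace X] [T2Space X]
    (h : IsQuotientOfShift (id : X → X)) :
    ∃ g : HStar → X, Continuous g ∧ Function.Surjective g := by
  obtain ⟨Q, hQc, hQs, hQσ⟩ := h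
  have he := isEmbedding_evalUnitInterval X
  obtain ⟨A, hA⟩ := exists_setOf_mapClusterPt_cubePath_eq_range (he.continuous.comp hQc)
    (fun p => congrArg (fun x (f : C(X, I)) => f x) (hQσ p))
  have hφ := continuous_cubePath A
  refine he.exists_continuous_surjective_of_range_eq
    ((continuous_stoneCechExtend hφ).comp continuous_subtype_val) ?_
  rw [range_comp, Subtype.range_coe_subtype]
  change stoneCechExtend hφ '' (range stoneCechUnit)ᶜ = _
  rw [stoneCechExtend_image_compl_range, hA, hQs.range_comp]
end

section
/- For every function q : ℕ → ℕ all of whose fibers are finite (q is finite-to-one), there exists a free (non-principal) ultrafilter p on ℕ such that s(q⁎(s(p))) ≠ q⁎(p), where s denotes the pushforward of ultrafilters under n ↦ n+1 and q⁎ denotes the pushforward of ultrafilters under q. Equivalently, the self-map of ω* induced by q does not satisfy Q ∘ σ = σ⁻¹ ∘ Q. -/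
/-!
Put `f := (· + 1) ∘ q ∘ (· + 1)`, so that the left-hand side is the pushforward of `p` under `f`.
Both `f` and `q` are finite-to-one, and they differ infinitely often: `f = q` on a tail would make
`q` strictly decreasing there. By a maximality argument, the set where they differ contains an
infinite set `t` with `f '' t` disjoint from `q '' t`, and any free ultrafilter containing `t` then
tells `p.map f` and `p.map q` apart.
-/

open Filter Set

theorem Set.Infinite.exists_infinite_subset_forall_not_rel {α : Type*} {s : Set α}
    (hs : s.Infinite) {r : α → α → Prop} (hirrefl : ∀ a ∈ s, ¬ r a a)
    (hfin_right : ∀ a, {b | r a b}.Finite) (hfin_left : ∀ b, {a | r a b}.Finite) :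
    ∃ t ⊆ s, t.Infinite ∧ ∀ a ∈ t, ∀ b ∈ t, ¬ r a b := by
  obtain ⟨t, ht⟩ := zorn_subset {t | t ⊆ s ∧ ∀ a ∈ t, ∀ b ∈ t, ¬ r a b} fun c hcS hc => by
    refine ⟨⋃₀ c, ⟨sUnion_subset fun u hu => (hcS hu).1, ?_⟩, fun u => subset_sUnion_of_mem⟩
    rintro a ⟨u, hu, hau⟩ b ⟨v, hv, hbv⟩
    obtain ⟨w, hw, huw, hvw⟩ := hc.directedOn u hu v hv
    exact (hcS hw).2 a (huw hau) b (hvw hbv)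
  obtain ⟨hts, ht_indep⟩ := ht.prop
  refine ⟨t, hts, fun ht_fin => ?_, ht_indep⟩
  -- a finite `t` has a finite neighbourhood, so some point of `s` could still be added to it
  have hbad : (t ∪ (⋃ a ∈ t, {b | r a b}) ∪ ⋃ b ∈ t, {a | r a b}).Finite :=
    (ht_fin.union (ht_fin.biUnion fun a _ => hfin_right a)).union
      (ht_fin.biUnion fun b _ => hfin_left b)
  obtain ⟨x, hxs, hx⟩ := (hs.sdiff hbad).nonempty
  simp only [mem_union, mem_iUnion, mem_ofPred_eq, not_or, not_exists] at hx
  obtain ⟨⟨hxt, hxr⟩, hrx⟩ := hx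
  have hins : insert x t ∈ {t | t ⊆ s ∧ ∀ a ∈ t, ∀ b ∈ t, ¬ r a b} := by
    simp only [mem_ofPred_eq, insert_subset_iff, forall_mem_insert]
    exact ⟨⟨hxs, hts⟩, ⟨hirrefl x hxs, hrx⟩, fun a ha => ⟨hxr a ha, ht_indep a ha⟩⟩
  exact hxt (ht.2 hins (subset_insert x t) (mem_insert x t))

theorem Set.Infinite.exists_ultrafilter_mem_forall_ne_pure {α : Type*} {t : Set α}
    (ht : t.Infinite) : ∃ p : Ultrafilter α, t ∈ p ∧ ∀ a, p ≠ pure a := by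
  have := ht.cofinite_inf_principal_neBot
  refine ⟨.of (cofinite ⊓ 𝓟 t), Ultrafilter.of_le _ (mem_inf_of_right (mem_principal_self t)),
    fun a hpure => ?_⟩
  have h : {a}ᶜ ∈ Ultrafilter.of (cofinite ⊓ 𝓟 t) :=
    Ultrafilter.of_le _ (mem_inf_of_left (finite_singleton a).compl_mem_cofinite)
  simp [hpure] at h

theorem Ultrafilter.map_ne_map_of_forall_ne {α β : Type*} {p : Ultrafilter α} {f g : α → β}
    {t : Set α} (ht : t ∈ p) (hfg : ∀ a ∈ t, ∀ b ∈ t, f a ≠ g b) : p.map f ≠ p.map g := by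
  intro h
  have hft : f ⁻¹' (g '' t) ∈ p := by
    rw [← Ultrafilter.mem_map, h, Ultrafilter.mem_map]
    exact mem_of_superset ht (subset_preimage_image g t)
  obtain ⟨a, ⟨b, hb, hba⟩, ha⟩ := nonempty_of_mem (inter_mem hft ht)
  exact hfg a ha b hb hba.symm

theorem Nat.infinite_setOf_ne_succ_add_one (q : ℕ → ℕ) : {n | q n ≠ q (n + 1) + 1}.Infinite := by
  rw [← Nat.frequently_atTop_iff_infinite]
  intro h
  obtain ⟨N, hN⟩ := eventually_atTop.1 h
  refine not_strictAnti_of_wellFoundedLT (fun k => q (N + k))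
    (strictAnti_nat_of_succ_lt fun k => ?_)
  have := hN (N + k) (Nat.le_add_right N k)
  simp only [not_not] at this
  simp only [← Nat.add_assoc, this, Nat.lt_add_one]

/-- For every finite-to-one `q : ℕ → ℕ` there is a free ultrafilter `p` on `ℕ`
with `s(q⁎(s(p))) ≠ q⁎(p)`, where `s` is pushforward under `n ↦ n + 1`;
i.e. the self-map of `ω*` induced by `q` does not conjugate `σ` to `σ⁻¹`. -/
theorem exists_free_ultrafilter_shift_map_ne
    (q : ℕ → ℕ) (hq : ∀ n : ℕ, (q ⁻¹' {n}).Finite) :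
    ∃ p : Ultrafilter ℕ, (∀ n : ℕ, p ≠ pure n) ∧
      Ultrafilter.map (· + 1) (Ultrafilter.map q (Ultrafilter.map (· + 1) p)) ≠
        Ultrafilter.map q p := by
  set f : ℕ → ℕ := (· + 1) ∘ q ∘ (· + 1)
  have hsucc : ∀ s : Set ℕ, s.Finite → ((· + 1) ⁻¹' s).Finite := fun s hs =>
    hs.preimage (add_left_injective 1).injOn
  have hf : ∀ n, (f ⁻¹' {n}).Finite := fun n =>
    hsucc _ ((hsucc _ (finite_singleton n)).preimage' fun b _ => hq b)
  obtain ⟨t, -, ht, hft⟩ :=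
    (Nat.infinite_setOf_ne_succ_add_one q).exists_infinite_subset_forall_not_rel
      (r := fun a b => f a = q b) (fun a ha => Ne.symm ha)
      (fun a => (hq (f a)).subset fun _ => Eq.symm) (fun b => hf (q b))
  obtain ⟨p, htp, hfree⟩ := ht.exists_ultrafilter_mem_forall_ne_pure
  refine ⟨p, hfree, ?_⟩
  rw [Ultrafilter.map_map, Ultrafilter.map_map]
  exact Ultrafilter.map_ne_map_of_forall_ne htp hft
end

section
/- For every function q : ℕ → ℕ all of whose fibers are finite (q is finite-to-one), there exists an infinite set B ⊆ ℕ such that for all b, b' ∈ B, q(b+1) + 1 ≠ q(b'). -/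
/-!
Call `b` *linked* to `b'` when `q (b + 1) + 1 = q b'`. Since `q` is finite-to-one, every `b` is
linked to finitely many `b'` and from finitely many `b`, so a greedy choice yields an infinite set
in which no two distinct elements are linked. Choosing only among the `b` not linked to
themselves handles `b = b'`; there are infinitely many of those, as otherwise `q` would
eventually decrease by one at every step.
-/

open Set

theorem Set.Infinite.exists_infinite_subset_pairwise_not {α : Type*} {r : α → α → Prop}
    {S : Set α} (hS : S.Infinite) (hout : ∀ a, {b | r a b}.Finite)
    (hin : ∀ b, {a | r a b}.Finite) :
    ∃ B ⊆ S, B.Infinite ∧ B.Pairwise fun a b => ¬ r a b := by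
  let indep : α → α → Prop := fun a b => a ≠ b ∧ ¬ r a b ∧ ¬ r b a
  have : Std.Symm indep := ⟨fun _ _ ⟨hne, h₁, h₂⟩ => ⟨hne.symm, h₂, h₁⟩⟩
  have extend : ∀ s : Finset α, (∀ x ∈ s, x ∈ S) → ∃ y, y ∈ S ∧ ∀ x ∈ s, indep x y := by
    intro s _
    have hbad : ((s : Set α) ∪ (⋃ x ∈ s, {y | r x y}) ∪ ⋃ x ∈ s, {y | r y x}).Finite :=
      (s.finite_toSet.union (s.finite_toSet.biUnion fun x _ => hout x)).union
        (s.finite_toSet.biUnion fun x _ => hin x)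
    obtain ⟨y, hyS, hy⟩ := (hS.sdiff hbad).nonempty
    simp only [mem_union, Finset.mem_coe, mem_iUnion, mem_ofPred_eq, not_or, not_exists] at hy
    exact ⟨y, hyS, fun x hx => ⟨fun h => hy.1.1 (h ▸ hx), hy.1.2 x hx, hy.2 x hx⟩⟩
  obtain ⟨f, hfS, hf⟩ := exists_seq_of_forall_finset_exists' (· ∈ S) indep extend
  have hinj : Function.Injective f := fun m n h => by_contra fun hne => (hf hne).1 h
  refine ⟨range f, range_subset_iff.2 hfS, infinite_range_of_injective hinj, ?_⟩
  rintro _ ⟨m, rfl⟩ _ ⟨n, rfl⟩ hne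
  exact (hf fun h => hne (congrArg f h)).2.1

theorem Nat.infinite_setOf_add_one_ne (f : ℕ → ℕ) : {n | f (n + 1) + 1 ≠ f n}.Infinite := by
  intro hfin
  obtain ⟨a, ha⟩ := hfin.bddAbove
  have hstep : ∀ n, a < n → f (n + 1) + 1 = f n := fun n hn => by
    by_contra h
    exact hn.not_ge (ha h)
  have hdescent : ∀ k, f (a + 1 + k) + k = f (a + 1) := by
    intro k
    induction k with
    | zero => rfl
    | succ k ih =>
      have := hstep (a + 1 + k) (by omega)
      change f (a + 1 + k + 1) + (k + 1) = _
      omega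
  have := hdescent (f (a + 1) + 1)
  omega

/-- For every finite-to-one `q : ℕ → ℕ` there is an infinite `B ⊆ ℕ` such that
`q(b+1) + 1 ≠ q(b')` for all `b, b' ∈ B`. -/
theorem exists_infinite_set_of_finite_to_one
    (q : ℕ → ℕ) (hq : ∀ n : ℕ, (q ⁻¹' {n}).Finite) :
    ∃ B : Set ℕ, B.Infinite ∧ ∀ b ∈ B, ∀ b' ∈ B, q (b + 1) + 1 ≠ q b' := by
  have hout : ∀ b, {b' | q (b + 1) + 1 = q b'}.Finite := fun b =>
    (hq (q (b + 1) + 1)).subset fun _ h => h.symm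
  have hin : ∀ b', {b | q (b + 1) + 1 = q b'}.Finite := fun b' =>
    ((hq (q b' - 1)).preimage_embedding (addRightEmbedding 1)).subset fun b (h : _ = _) => by
      simp only [mem_preimage, addRightEmbedding_apply, mem_singleton_iff]
      omega
  obtain ⟨B, hBS, hB, hBpair⟩ :=
    (Nat.infinite_setOf_add_one_ne q).exists_infinite_subset_pairwise_not hout hin
  refine ⟨B, hB, fun b hb b' hb' => ?_⟩
  rcases eq_or_ne b b' with rfl | hne
  · exact hBS hb
  · exact hBpair hb hb' hne
end
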